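/- arXiv:2304.13217 — 4 statements merged into one kernel-verified Lean document; each statement's English description precedes it below -/
import Mathlib

section
/- Let $D=(V,A)$ be a digraph with root $r$, let $S \in \mathcal{F}_{k,r}$, let $f \in A \setminus S$ with head distinct from $r$, and let $X$ be the inclusionwise minimal tight set with respect to $S$ containing both endpoints of $f$ (setting $X = V$ if no tight set contains $f$). If $e \in S$ satisfies $\mathrm{head}(e) = \mathrm{head}(f)$ and both endpoints of $e$ lie in $X$, then $S - e + f \in \mathcal{F}_{k,r}$. -/
open Finset

variable {V A : Type*}

/-- Number of arcs of `F` entering the vertex set `X`. -/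
def inDeg [DecidableEq V] (hd tl : A → V) (F : Finset A) (X : Finset V) : ℕ :=
  (F.filter (fun a => hd a ∈ X ∧ tl a ∉ X)).card

/-- Number of arcs of `F` with head `v`. -/
def vDeg [DecidableEq V] (hd : A → V) (F : Finset A) (v : V) : ℕ :=
  (F.filter (fun a => hd a = v)).card

/-- The vertex set `X` contains the arc `a` (both endpoints in `X`). -/
def ArcIn (hd tl : A → V) (X : Finset V) (a : A) : Prop :=
  hd a ∈ X ∧ tl a ∈ X

/-- `F` contains a directed cycle. -/
def HasDicycle (hd tl : A → V) (F : Finset A) : Prop :=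
  ∃ n : ℕ, 0 < n ∧ ∃ (v : Fin (n + 1) → V) (e : Fin n → A),
    (∀ i : Fin n, e i ∈ F ∧ tl (e i) = v i.castSucc ∧ hd (e i) = v i.succ) ∧
    v 0 = v (Fin.last n)

/-- `F` is an `r`-arborescence: acyclic, every non-root vertex has exactly one
incoming arc, and `r` has none. -/
def IsArb [DecidableEq V] (hd tl : A → V) (r : V) (F : Finset A) : Prop :=
  ¬ HasDicycle hd tl F ∧ (∀ v : V, v ≠ r → inDeg hd tl F {v} = 1) ∧
    inDeg hd tl F {r} = 0

/-- `F` can be partitioned into `k` arc-disjoint `r`-arborescences. -/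
def Feasible [DecidableEq V] [DecidableEq A] (hd tl : A → V) (k : ℕ) (r : V)
    (F : Finset A) : Prop :=
  ∃ P : Fin k → Finset A, (∀ i j : Fin k, i ≠ j → Disjoint (P i) (P j)) ∧
    Finset.univ.biUnion P = F ∧ ∀ i : Fin k, IsArb hd tl r (P i)

/-- `F` can be partitioned into `k` arc-disjoint arborescences with arbitrary roots. -/
def FeasibleAny [DecidableEq V] [DecidableEq A] (hd tl : A → V) (k : ℕ)
    (F : Finset A) : Prop :=
  ∃ P : Fin k → Finset A, (∀ i j : Fin k, i ≠ j → Disjoint (P i) (P j)) ∧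
    Finset.univ.biUnion P = F ∧ ∀ i : Fin k, ∃ r : V, IsArb hd tl r (P i)

/-- `X` is a tight set with respect to `S`: it avoids the root and exactly `k`
arcs of `S` enter it. -/
def Tight [DecidableEq V] (hd tl : A → V) (S : Finset A) (k : ℕ) (r : V)
    (X : Finset V) : Prop :=
  r ∉ X ∧ inDeg hd tl S X = k

/-- `X` is the inclusionwise minimal tight set with respect to `S` containing the
arc `f`, or `X = V` if no tight set contains `f`. -/
def MinTightFor [Fintype V] [DecidableEq V] (hd tl : A → V) (S : Finset A)
    (k : ℕ) (r : V) (f : A) (X : Finset V) : Prop :=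
  (Tight hd tl S k r X ∧ ArcIn hd tl X f ∧
    ∀ Y : Finset V, Tight hd tl S k r Y → ArcIn hd tl Y f → X ⊆ Y) ∨
  ((¬ ∃ Y : Finset V, Tight hd tl S k r Y ∧ ArcIn hd tl Y f) ∧ X = Finset.univ)

/-- A directed cycle of length `m` in the auxiliary digraph `H` on `[p]`, whose
arcs are the pairs `(i, j)` such that `X i` contains `e j`. -/
def AuxCycle {p : ℕ} (hd tl : A → V) (X : Fin p → Finset V) (e : Fin p → A)
    (m : ℕ) : Prop :=
  ∃ c : Fin m → Fin p, Function.Injective c ∧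
    ∀ i : Fin m, ArcIn hd tl (X (c i)) (e (c ⟨(i.val + 1) % m, Nat.mod_lt _ i.pos⟩))

/-- `seq` is a reconfiguration sequence of length `ℓ` from `S` to `T` within the
family described by `Feas`. -/
def IsReconfig [DecidableEq A] (Feas : Finset A → Prop) (S T : Finset A) (ℓ : ℕ)
    (seq : Fin (ℓ + 1) → Finset A) : Prop :=
  seq 0 = S ∧ seq (Fin.last ℓ) = T ∧ (∀ i, Feas (seq i)) ∧
    ∀ i : Fin ℓ, (seq i.castSucc \ seq i.succ).card = 1 ∧
      (seq i.succ \ seq i.castSucc).card = 1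

set_option linter.unusedSectionVars false

section Helpers
variable [DecidableEq V] [DecidableEq A] (hd tl : A → V)

lemma inDeg_insert {F : Finset A} {b : A} (hb : b ∉ F) (Y : Finset V) :
    inDeg hd tl (insert b F) Y
      = inDeg hd tl F Y + (if hd b ∈ Y ∧ tl b ∉ Y then 1 else 0) := by
  unfold inDeg
  by_cases h : hd b ∈ Y ∧ tl b ∉ Y
  · rw [Finset.filter_insert, if_pos h, if_pos h,
      Finset.card_insert_of_notMem (fun hc => hb (Finset.mem_of_mem_filter _ hc))]
  · rw [Finset.filter_insert, if_neg h, if_neg h]; omega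

lemma inDeg_erase {F : Finset A} {b : A} (hb : b ∈ F) (Y : Finset V) :
    inDeg hd tl F Y
      = inDeg hd tl (F.erase b) Y + (if hd b ∈ Y ∧ tl b ∉ Y then 1 else 0) := by
  conv_lhs => rw [← Finset.insert_erase hb]
  rw [inDeg_insert hd tl (Finset.notMem_erase b F)]

lemma inDeg_sdiff {F G : Finset A} (h : F ⊆ G) (Y : Finset V) :
    inDeg hd tl G Y = inDeg hd tl F Y + inDeg hd tl (G \ F) Y := by
  unfold inDeg
  have hd1 : Disjoint (F.filter (fun a => hd a ∈ Y ∧ tl a ∉ Y))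
      ((G \ F).filter (fun a => hd a ∈ Y ∧ tl a ∉ Y)) :=
    Finset.disjoint_filter_filter Finset.disjoint_sdiff
  have := Finset.card_union_of_disjoint hd1
  rw [← Finset.filter_union, Finset.union_sdiff_of_subset h] at this
  omega

lemma inDeg_biUnion {k : ℕ} (P : Fin k → Finset A)
    (hdisj : ∀ i j : Fin k, i ≠ j → Disjoint (P i) (P j)) (Y : Finset V) :
    inDeg hd tl (Finset.univ.biUnion P) Y = ∑ i, inDeg hd tl (P i) Y := by
  unfold inDeg
  rw [Finset.filter_biUnion]
  exact Finset.card_biUnion (fun i _ j _ hij =>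
    Finset.disjoint_filter_filter (hdisj i j hij))

lemma inDeg_submod (F : Finset A) (X Y : Finset V) :
    inDeg hd tl F (X ∩ Y) + inDeg hd tl F (X ∪ Y)
      ≤ inDeg hd tl F X + inDeg hd tl F Y := by
  unfold inDeg
  rw [Finset.card_filter, Finset.card_filter, Finset.card_filter, Finset.card_filter,
    ← Finset.sum_add_distrib, ← Finset.sum_add_distrib]
  refine Finset.sum_le_sum fun a _ => ?_
  by_cases h1 : hd a ∈ X <;> by_cases h2 : hd a ∈ Y <;>
    by_cases h3 : tl a ∈ X <;> by_cases h4 : tl a ∈ Y <;>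
    simp [Finset.mem_inter, Finset.mem_union, h1, h2, h3, h4]

end Helpers
section Cycles
variable [DecidableEq V] [DecidableEq A] (hd tl : A → V)

lemma noDicycle_empty : ¬ HasDicycle hd tl (∅ : Finset A) := by
  rintro ⟨n, hn, v, e, he, -⟩
  exact absurd (he ⟨0, hn⟩).1 (Finset.notMem_empty _)

lemma selfloop_dicycle {F : Finset A} {a : A} (ha : a ∈ F) (h : hd a = tl a) :
    HasDicycle hd tl F :=
  ⟨1, one_pos, fun _ => tl a, fun _ => a, fun _ => ⟨ha, rfl, h⟩, rfl⟩

lemma noloop_of_isArb {F : Finset A} {r : V} (h : IsArb hd tl r F) {a : A}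
    (ha : a ∈ F) : hd a ≠ tl a :=
  fun hc => h.1 (selfloop_dicycle hd tl ha hc)

lemma nocycle_insert {R : Finset V} {F : Finset A} {b : A}
    (hF : ∀ a ∈ F, hd a ∈ R ∧ tl a ∈ R) (hb1 : hd b ∉ R) (hb2 : tl b ∈ R)
    (h : ¬ HasDicycle hd tl F) : ¬ HasDicycle hd tl (insert b F) := by
  rintro ⟨n, hn, v, e, he, hv⟩
  by_cases hall : ∀ i, e i ∈ F
  · exact h ⟨n, hn, v, e, fun i => ⟨hall i, (he i).2⟩, hv⟩
  push_neg at hall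
  obtain ⟨i, hi⟩ := hall
  have heb : e i = b := by
    rcases Finset.mem_insert.1 (he i).1 with h2 | h2
    · exact h2
    · exact absurd h2 hi
  have htl : ∀ j : Fin n, v j.castSucc ∈ R := by
    intro j
    rcases Finset.mem_insert.1 (he j).1 with h2 | h2
    · rw [← (he j).2.1, h2]; exact hb2
    · rw [← (he j).2.1]; exact (hF _ h2).2
  have hv' : v i.succ = hd b := by rw [← heb]; exact ((he i).2.2).symm
  have hmem : v i.succ ∈ R := by
    rcases Nat.lt_or_ge (i.val + 1) n with hlt | hge
    · have hh := htl ⟨i.val + 1, hlt⟩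
      have hvv : (⟨i.val + 1, hlt⟩ : Fin n).castSucc = i.succ := Fin.ext (by simp)
      rwa [hvv] at hh
    · have hin : i.val + 1 = n := le_antisymm i.isLt hge
      have hh := htl ⟨0, hn⟩
      have h00 : (⟨0, hn⟩ : Fin n).castSucc = (0 : Fin (n + 1)) := Fin.ext (by simp)
      rw [h00, hv] at hh
      have hlast : Fin.last n = i.succ := Fin.ext (by simp [← hin])
      rwa [hlast] at hh
  rw [hv'] at hmem
  exact hb1 hmem

lemma arb_enters {F : Finset A} {r : V} (h : IsArb hd tl r F) {X : Finset V}
    (hX : X.Nonempty) (hr : r ∉ X) : 1 ≤ inDeg hd tl F X := by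
  by_contra hcon
  have hzero : ∀ a ∈ F, ¬ (hd a ∈ X ∧ tl a ∉ X) := by
    intro a ha hc
    have : 0 < inDeg hd tl F X := Finset.card_pos.2 ⟨a, Finset.mem_filter.2 ⟨ha, hc⟩⟩
    omega
  have key : ∀ v ∈ X, ∃ a, a ∈ F ∧ hd a = v ∧ tl a ∈ X := by
    intro v hv
    have hv1 : inDeg hd tl F {v} = 1 := (h.2.1) v (fun hc => hr (hc ▸ hv))
    have : (F.filter (fun a => hd a ∈ ({v} : Finset V) ∧ tl a ∉ ({v} : Finset V))).Nonempty := by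
      rw [← Finset.card_pos]; unfold inDeg at hv1; omega
    obtain ⟨a, ha⟩ := this
    rw [Finset.mem_filter, Finset.mem_singleton, Finset.mem_singleton] at ha
    refine ⟨a, ha.1, ha.2.1, ?_⟩
    by_contra hc
    exact hzero a ha.1 ⟨ha.2.1 ▸ hv, hc⟩
  obtain ⟨x0, hx0⟩ := hX
  obtain ⟨a0, -⟩ := key x0 hx0
  classical
  set arcOf : V → A := fun v =>
    if hex : ∃ a, a ∈ F ∧ hd a = v ∧ tl a ∈ X then hex.choose else a0 with harcOf
  have harc : ∀ v ∈ X, arcOf v ∈ F ∧ hd (arcOf v) = v ∧ tl (arcOf v) ∈ X := by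
    intro v hv
    have hex := key v hv
    rw [harcOf]; simp only [dif_pos hex]
    exact hex.choose_spec
  set w : ℕ → V := fun n => (fun v => tl (arcOf v))^[n] x0 with hw
  have hwX : ∀ n, w n ∈ X := by
    intro n
    induction n with
    | zero => exact hx0
    | succ m ih =>
        have : w (m + 1) = tl (arcOf (w m)) := by
          rw [hw]; simp [Function.iterate_succ_apply']
        rw [this]; exact (harc _ ih).2.2
  have hwsucc : ∀ n, w (n + 1) = tl (arcOf (w n)) := by
    intro n; rw [hw]; simp [Function.iterate_succ_apply']
  obtain ⟨i, hi, j, hj, hij, hwij⟩ :=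
    Finset.exists_ne_map_eq_of_card_lt_of_maps_to
      (s := Finset.range (X.card + 1)) (t := X)
      (by simp) (fun n _ => hwX n)
  wlog hlt : i < j generalizing i j
  · exact this j hj i hi hij.symm hwij.symm (by omega)
  apply h.1
  refine ⟨j - i, by omega, fun t => w (j - t.val), fun t => arcOf (w (j - t.val - 1)), ?_, ?_⟩
  · intro t
    have ht : t.val < j - i := t.isLt
    have hmem : w (j - t.val - 1) ∈ X := hwX _
    refine ⟨(harc _ hmem).1, ?_, ?_⟩
    · rw [← hwsucc (j - t.val - 1)]
      have : j - t.val - 1 + 1 = j - (t.castSucc).val := by simp; omega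
      rw [this]
    · rw [(harc _ hmem).2.1]
      have : j - t.val - 1 = j - (t.succ).val := by simp; omega
      rw [this]
  · show w (j - 0) = w (j - (j - i))
    have h1 : j - 0 = j := by omega
    have h2 : j - (j - i) = i := by omega
    rw [h1, h2, hwij]

end Cycles
section Ext
variable [Fintype V] [DecidableEq V] [DecidableEq A]

lemma ext_lemma (hd tl : A → V) (r : V) {k : ℕ} (hk : 1 ≤ k) (S : Finset A)
    (hcut : ∀ X : Finset V, X.Nonempty → r ∉ X → k ≤ inDeg hd tl S X) :
    ∀ m : ℕ, ∀ F : Finset A, ∀ R : Finset V,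
      (Finset.univ \ R).card = m → r ∈ R → F ⊆ S →
      (∀ a ∈ F, hd a ∈ R ∧ tl a ∈ R) →
      (∀ v ∈ R, v ≠ r → inDeg hd tl F {v} = 1) →
      inDeg hd tl F {r} = 0 →
      ¬ HasDicycle hd tl F →
      (∀ X : Finset V, X.Nonempty → r ∉ X → k - 1 ≤ inDeg hd tl (S \ F) X) →
      ∃ F', F ⊆ F' ∧ F' ⊆ S ∧ IsArb hd tl r F' ∧
        (∀ X : Finset V, X.Nonempty → r ∉ X → k - 1 ≤ inDeg hd tl (S \ F') X) := by
  intro m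
  induction m with
  | zero =>
      intro F R hcard hrR hFS hend hdeg hr0 hacyc hinv
      have hRuniv : ∀ v : V, v ∈ R := by
        have : (Finset.univ \ R) = ∅ := Finset.card_eq_zero.1 hcard
        intro v
        by_contra hc
        exact absurd (Finset.mem_sdiff.2 ⟨Finset.mem_univ v, hc⟩) (this ▸ Finset.notMem_empty v)
      exact ⟨F, subset_rfl, hFS, ⟨hacyc, fun v hv => hdeg v (hRuniv v) hv, hr0⟩, hinv⟩
  | succ m ih =>
      intro F R hcard hrR hFS hend hdeg hr0 hacyc hinv
      have hFz : ∀ Z : Finset V, (∀ z ∈ Z, z ∉ R) → inDeg hd tl F Z = 0 := by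
        intro Z hZ
        unfold inDeg
        rw [Finset.card_eq_zero, Finset.filter_eq_empty_iff]
        intro a ha hc
        exact hZ _ hc.1 (hend a ha).1
      have hSF : ∀ Z : Finset V, (∀ z ∈ Z, z ∉ R) → Z.Nonempty → r ∉ Z →
          k ≤ inDeg hd tl (S \ F) Z := by
        intro Z hZ h1 h2
        have := inDeg_sdiff hd tl hFS Z
        have := hFz Z hZ
        have := hcut Z h1 h2
        omega
      have hne : (Finset.univ \ R).Nonempty := by rw [← Finset.card_pos]; omega
      -- Claim: there is a good arc to add
      obtain ⟨a, haS, haF, hahd, hatl, hagood⟩ :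
          ∃ a, a ∈ S ∧ a ∉ F ∧ hd a ∉ R ∧ tl a ∈ R ∧
            ∀ Y : Finset V, Y.Nonempty → r ∉ Y → hd a ∈ Y → tl a ∉ Y →
              k ≤ inDeg hd tl (S \ F) Y := by
        classical
        set Crit : Finset (Finset V) := Finset.univ.filter (fun X =>
          X.Nonempty ∧ r ∉ X ∧ (X \ R).Nonempty ∧ inDeg hd tl (S \ F) X = k - 1) with hCritdef
        have hCritmem : ∀ X : Finset V, X ∈ Crit ↔
            X.Nonempty ∧ r ∉ X ∧ (X \ R).Nonempty ∧ inDeg hd tl (S \ F) X = k - 1 := by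
          intro X; rw [hCritdef, Finset.mem_filter]; simp
        by_cases hCrit : Crit.Nonempty
        · obtain ⟨Xs, hXmem, hXmin⟩ := Finset.exists_min_image Crit Finset.card hCrit
          obtain ⟨hXne, hXr, hXout, hXdeg⟩ := (hCritmem Xs).1 hXmem
          have hTR : ∀ z ∈ Xs \ R, z ∉ R := fun z hz => (Finset.mem_sdiff.1 hz).2
          have hTr : r ∉ Xs \ R := fun hc => (Finset.mem_sdiff.1 hc).2 hrR
          have hcount : k ≤ inDeg hd tl (S \ F) (Xs \ R) := hSF _ hTR hXout hTr
          have hsub : ∃ a ∈ (S \ F).filter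
              (fun a => hd a ∈ Xs \ R ∧ tl a ∉ Xs \ R), tl a ∈ Xs := by
            by_contra hcon
            push_neg at hcon
            have hss : (S \ F).filter (fun a => hd a ∈ Xs \ R ∧ tl a ∉ Xs \ R) ⊆
                (S \ F).filter (fun a => hd a ∈ Xs ∧ tl a ∉ Xs) := by
              intro a ha
              have h1 := Finset.mem_filter.1 ha
              exact Finset.mem_filter.2 ⟨h1.1, (Finset.mem_sdiff.1 h1.2.1).1, hcon a ha⟩
            have := Finset.card_le_card hss
            unfold inDeg at hcount hXdeg
            omega
          obtain ⟨a, hamem, hatlXs⟩ := hsub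
          have h1 := Finset.mem_filter.1 hamem
          have haSF := Finset.mem_sdiff.1 h1.1
          have hahd' : hd a ∈ Xs \ R := h1.2.1
          have hatlR : tl a ∈ R := by
            by_contra hc
            exact h1.2.2 (Finset.mem_sdiff.2 ⟨hatlXs, hc⟩)
          refine ⟨a, haSF.1, haSF.2, (Finset.mem_sdiff.1 hahd').2, hatlR, ?_⟩
          intro Y hYne hYr hhY htY
          by_contra hlt
          have hYdeg : inDeg hd tl (S \ F) Y = k - 1 := by
            have := hinv Y hYne hYr; omega
          have hYCrit : Y ∈ Crit := (hCritmem Y).2 ⟨hYne, hYr,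
            ⟨hd a, Finset.mem_sdiff.2 ⟨hhY, (Finset.mem_sdiff.1 hahd').2⟩⟩, hYdeg⟩
          have hsubmod := inDeg_submod hd tl (S \ F) Xs Y
          have hunion : k - 1 ≤ inDeg hd tl (S \ F) (Xs ∪ Y) := by
            refine hinv _ ⟨hd a, Finset.mem_union_left _ (Finset.mem_sdiff.1 hahd').1⟩ ?_
            rw [Finset.mem_union]; tauto
          have hinter_ne : (Xs ∩ Y).Nonempty :=
            ⟨hd a, Finset.mem_inter.2 ⟨(Finset.mem_sdiff.1 hahd').1, hhY⟩⟩
          have hinter_r : r ∉ Xs ∩ Y := fun hc => hXr (Finset.mem_inter.1 hc).1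
          have hinter_lb := hinv _ hinter_ne hinter_r
          have hinter : inDeg hd tl (S \ F) (Xs ∩ Y) = k - 1 := by omega
          have hinterCrit : Xs ∩ Y ∈ Crit := (hCritmem _).2 ⟨hinter_ne, hinter_r,
            ⟨hd a, Finset.mem_sdiff.2 ⟨Finset.mem_inter.2
              ⟨(Finset.mem_sdiff.1 hahd').1, hhY⟩, (Finset.mem_sdiff.1 hahd').2⟩⟩, hinter⟩
          have hXsY : Xs ∩ Y = Xs :=
            Finset.eq_of_subset_of_card_le Finset.inter_subset_left
              (by have := hXmin _ hinterCrit; omega)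
          have : Xs ⊆ Y := Finset.inter_eq_left.1 hXsY
          exact htY (this hatlXs)
        · have hTR : ∀ z ∈ Finset.univ \ R, z ∉ R := fun z hz => (Finset.mem_sdiff.1 hz).2
          have hTr : r ∉ Finset.univ \ R := fun hc => (Finset.mem_sdiff.1 hc).2 hrR
          have hcount : k ≤ inDeg hd tl (S \ F) (Finset.univ \ R) := hSF _ hTR hne hTr
          have hfne : ((S \ F).filter
              (fun a => hd a ∈ Finset.univ \ R ∧ tl a ∉ Finset.univ \ R)).Nonempty := by
            rw [← Finset.card_pos]; unfold inDeg at hcount; omega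
          obtain ⟨a, hamem⟩ := hfne
          have h1 := Finset.mem_filter.1 hamem
          have haSF := Finset.mem_sdiff.1 h1.1
          have hahd' : hd a ∉ R := (Finset.mem_sdiff.1 h1.2.1).2
          have hatlR : tl a ∈ R := by
            by_contra hc
            exact h1.2.2 (Finset.mem_sdiff.2 ⟨Finset.mem_univ _, hc⟩)
          refine ⟨a, haSF.1, haSF.2, hahd', hatlR, ?_⟩
          intro Y hYne hYr hhY htY
          by_contra hlt
          have hYdeg : inDeg hd tl (S \ F) Y = k - 1 := by
            have := hinv Y hYne hYr; omega
          exact hCrit ⟨Y, (hCritmem Y).2 ⟨hYne, hYr,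
            ⟨hd a, Finset.mem_sdiff.2 ⟨hhY, hahd'⟩⟩, hYdeg⟩⟩
      -- add the arc a
      have har : hd a ≠ r := fun hc => hahd (hc ▸ hrR)
      have haloop : tl a ≠ hd a := fun hc => hahd (hc ▸ hatl)
      have hstep := ih (insert a F) (insert (hd a) R)
        (by
          rw [Finset.sdiff_insert, Finset.card_erase_of_mem
            (Finset.mem_sdiff.2 ⟨Finset.mem_univ _, hahd⟩)]
          omega)
        (Finset.mem_insert_of_mem hrR)
        (Finset.insert_subset haS hFS)
        (by
          intro b hb
          rcases Finset.mem_insert.1 hb with hb | hb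
          · subst hb
            exact ⟨Finset.mem_insert_self _ _, Finset.mem_insert_of_mem hatl⟩
          · exact ⟨Finset.mem_insert_of_mem (hend b hb).1,
              Finset.mem_insert_of_mem (hend b hb).2⟩)
        (by
          intro v hv hvr
          rw [inDeg_insert hd tl haF]
          rcases Finset.mem_insert.1 hv with hv | hv
          · subst hv
            rw [if_pos ⟨Finset.mem_singleton_self _,
              fun hc => haloop (Finset.mem_singleton.1 hc)⟩,
              hFz {hd a} (fun z hz => (Finset.mem_singleton.1 hz) ▸ hahd)]
          · have hcond : ¬ (hd a ∈ ({v} : Finset V) ∧ tl a ∉ ({v} : Finset V)) :=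
              fun hc => hahd ((Finset.mem_singleton.1 hc.1) ▸ hv)
            rw [if_neg hcond, hdeg v hv hvr]
        )
        (by
          have hcond : ¬ (hd a ∈ ({r} : Finset V) ∧ tl a ∉ ({r} : Finset V)) :=
            fun hc => har (Finset.mem_singleton.1 hc.1)
          rw [inDeg_insert hd tl haF, if_neg hcond, hr0])
        (nocycle_insert hd tl hend hahd hatl hacyc)
        (by
          intro X hXne hXr
          have hsd : S \ insert a F = (S \ F).erase a := Finset.sdiff_insert S F a
          have hmem : a ∈ S \ F := Finset.mem_sdiff.2 ⟨haS, haF⟩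
          have herase := inDeg_erase hd tl hmem X
          rw [hsd]
          by_cases hc : hd a ∈ X ∧ tl a ∉ X
          · have := hagood X hXne hXr hc.1 hc.2
            rw [if_pos hc] at herase
            omega
          · rw [if_neg hc] at herase
            have := hinv X hXne hXr
            omega)
      obtain ⟨F', h1, h2, h3, h4⟩ := hstep
      exact ⟨F', (Finset.subset_insert a F).trans h1, h2, h3, h4⟩

end Ext
section Edmonds
variable [Fintype V] [DecidableEq V] [DecidableEq A]

lemma inDeg_empty (hd tl : A → V) (Y : Finset V) : inDeg hd tl (∅ : Finset A) Y = 0 := by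
  unfold inDeg; simp

lemma edmonds (hd tl : A → V) (k : ℕ) (r : V) :
    ∀ S : Finset A, (∀ a ∈ S, hd a ≠ tl a) →
      (∀ v : V, v ≠ r → inDeg hd tl S {v} = k) →
      inDeg hd tl S {r} = 0 →
      (∀ X : Finset V, X.Nonempty → r ∉ X → k ≤ inDeg hd tl S X) →
      Feasible hd tl k r S := by
  induction k with
  | zero =>
      intro S ha hb hc hcut
      have hS : S = ∅ := by
        rw [Finset.eq_empty_iff_forall_notMem]
        intro a haS
        have h407 : a ∈ S.filter
            (fun b => hd b ∈ ({hd a} : Finset V) ∧ tl b ∉ ({hd a} : Finset V)) := by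
          refine Finset.mem_filter.2 ⟨haS, Finset.mem_singleton_self _, ?_⟩
          rw [Finset.mem_singleton]
          exact fun hcc => ha a haS (hcc.symm)
        have hpos : 0 < inDeg hd tl S {hd a} := Finset.card_pos.2 ⟨a, h407⟩
        by_cases hv : hd a = r
        · rw [hv] at hpos; omega
        · rw [hb (hd a) hv] at hpos; omega
      subst hS
      refine ⟨fun i => i.elim0, fun i => i.elim0, ?_, fun i => i.elim0⟩
      simp
  | succ k ihk =>
      intro S ha hb hc hcut
      obtain ⟨F, -, hFS, hFarb, hFinv⟩ :=
        ext_lemma hd tl r (Nat.succ_le_succ (Nat.zero_le k)) S hcut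
          (Finset.univ \ {r}).card ∅ {r} rfl (Finset.mem_singleton_self r)
          (Finset.empty_subset S)
          (fun a h => absurd h (Finset.notMem_empty a))
          (fun v hv hvr => absurd (Finset.mem_singleton.1 hv) hvr)
          (inDeg_empty hd tl {r})
          (noDicycle_empty hd tl)
          (by
            intro X h1 h2
            rw [Finset.sdiff_empty]
            have := hcut X h1 h2
            omega)
      have hFinv' : ∀ X : Finset V, X.Nonempty → r ∉ X → k ≤ inDeg hd tl (S \ F) X := by
        intro X h1 h2
        have := hFinv X h1 h2
        omega
      have hbal := fun (Y : Finset V) => inDeg_sdiff hd tl hFS Y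
      obtain ⟨P2, hP2disj, hP2un, hP2arb⟩ := ihk (S \ F)
        (fun a haa => ha a (Finset.mem_sdiff.1 haa).1)
        (by
          intro v hv
          have h1 := hbal {v}
          have h2 := hb v hv
          have h3 := hFarb.2.1 v hv
          omega)
        (by
          have h1 := hbal {r}
          have h3 := hFarb.2.2
          omega)
        hFinv'
      have hP2sub : ∀ i, P2 i ⊆ S \ F := fun i =>
        hP2un ▸ Finset.subset_biUnion_of_mem P2 (Finset.mem_univ i)
      refine ⟨Fin.cons F P2, ?_, ?_, ?_⟩
      · intro i j hij
        rcases Fin.eq_zero_or_eq_succ i with rfl | ⟨i', rfl⟩ <;>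
          rcases Fin.eq_zero_or_eq_succ j with rfl | ⟨j', rfl⟩
        · exact absurd rfl hij
        · rw [Fin.cons_zero, Fin.cons_succ]
          exact Finset.disjoint_sdiff.mono_right (hP2sub j')
        · rw [Fin.cons_zero, Fin.cons_succ]
          exact (Finset.disjoint_sdiff.mono_right (hP2sub i')).symm
        · rw [Fin.cons_succ, Fin.cons_succ]
          exact hP2disj i' j' (fun hcc => hij (by rw [hcc]))
      · ext x
        rw [Finset.mem_biUnion]
        constructor
        · rintro ⟨i, -, hx⟩
          rcases Fin.eq_zero_or_eq_succ i with rfl | ⟨i', rfl⟩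
          · rw [Fin.cons_zero] at hx; exact hFS hx
          · rw [Fin.cons_succ] at hx
            exact (Finset.mem_sdiff.1 (hP2sub i' hx)).1
        · intro hx
          by_cases hxF : x ∈ F
          · exact ⟨0, Finset.mem_univ _, by rw [Fin.cons_zero]; exact hxF⟩
          · have : x ∈ Finset.univ.biUnion P2 := by
              rw [hP2un]; exact Finset.mem_sdiff.2 ⟨hx, hxF⟩
            obtain ⟨i, -, hxi⟩ := Finset.mem_biUnion.1 this
            exact ⟨i.succ, Finset.mem_univ _, by rw [Fin.cons_succ]; exact hxi⟩
      · intro i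
        rcases Fin.eq_zero_or_eq_succ i with rfl | ⟨i', rfl⟩
        · rw [Fin.cons_zero]; exact hFarb
        · rw [Fin.cons_succ]; exact hP2arb i'

end Edmonds
theorem stmt_1 [Fintype V] [DecidableEq V] [DecidableEq A] (hd tl : A → V)
    (k : ℕ) (r : V) (S : Finset A) (hS : Feasible hd tl k r S)
    (f : A) (hf : f ∉ S) (hfr : hd f ≠ r)
    (X : Finset V) (hX : MinTightFor hd tl S k r f X)
    (e : A) (he : e ∈ S) (hhead : hd e = hd f) (heX : ArcIn hd tl X e) :
    Feasible hd tl k r (insert f (S.erase e)) := by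
  classical
  obtain ⟨P, hdisj, hun, harb⟩ := hS
  have hsum : ∀ Y : Finset V, inDeg hd tl S Y = ∑ i, inDeg hd tl (P i) Y := by
    intro Y
    rw [← hun]
    exact inDeg_biUnion hd tl P hdisj Y
  have hnoloop : ∀ a ∈ S, hd a ≠ tl a := by
    intro a haS
    rw [← hun] at haS
    obtain ⟨i, -, hi⟩ := Finset.mem_biUnion.1 haS
    exact noloop_of_isArb hd tl (harb i) hi
  have hb : ∀ v : V, v ≠ r → inDeg hd tl S {v} = k := by
    intro v hv
    rw [hsum, Finset.sum_congr rfl (fun i _ => (harb i).2.1 v hv)]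
    simp
  have hcr : inDeg hd tl S {r} = 0 := by
    rw [hsum]
    exact Finset.sum_eq_zero (fun i _ => (harb i).2.2)
  have hcut : ∀ Y : Finset V, Y.Nonempty → r ∉ Y → k ≤ inDeg hd tl S Y := by
    intro Y h1 h2
    rw [hsum]
    calc k = ∑ _i : Fin k, 1 := by simp
      _ ≤ ∑ i, inDeg hd tl (P i) Y :=
        Finset.sum_le_sum fun i _ => arb_enters hd tl (harb i) h1 h2
  have hfloop : hd f ≠ tl f := by
    intro hcc
    have htight : Tight hd tl S k r {hd f} :=
      ⟨fun h => hfr (Finset.mem_singleton.1 h).symm, hb (hd f) hfr⟩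
    have harcin : ArcIn hd tl {hd f} f :=
      ⟨Finset.mem_singleton_self _, by rw [← hcc]; exact Finset.mem_singleton_self _⟩
    rcases hX with ⟨hXt, hXf, hXmin⟩ | ⟨hno, hXuniv⟩
    · have h1 : tl e = hd f := Finset.mem_singleton.1 (hXmin _ htight harcin heX.2)
      exact hnoloop e he (by rw [hhead, h1])
    · exact hno ⟨{hd f}, htight, harcin⟩
  have heloop : hd e ≠ tl e := hnoloop e he
  have hfni : f ∉ S.erase e := fun h => hf (Finset.mem_of_mem_erase h)
  have hH1 : ∀ Y : Finset V,
      inDeg hd tl (insert f (S.erase e)) Y + (if hd e ∈ Y ∧ tl e ∉ Y then 1 else 0)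
        = inDeg hd tl S Y + (if hd f ∈ Y ∧ tl f ∉ Y then 1 else 0) := by
    intro Y
    rw [inDeg_insert hd tl hfni Y]
    have h2 := inDeg_erase hd tl he Y
    omega
  apply edmonds
  · intro a haS'
    rcases Finset.mem_insert.1 haS' with rfl | h
    · exact hfloop
    · exact hnoloop a (Finset.mem_of_mem_erase h)
  · intro v hv
    have hY := hH1 {v}
    have hb' := hb v hv
    by_cases hvf : v = hd f
    · subst hvf
      have hce : hd e ∈ ({hd f} : Finset V) ∧ tl e ∉ ({hd f} : Finset V) :=
        ⟨by rw [hhead]; exact Finset.mem_singleton_self _,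
         fun h => heloop (by rw [hhead, Finset.mem_singleton.1 h])⟩
      have hcf : hd f ∈ ({hd f} : Finset V) ∧ tl f ∉ ({hd f} : Finset V) :=
        ⟨Finset.mem_singleton_self _,
         fun h => hfloop ((Finset.mem_singleton.1 h).symm)⟩
      rw [if_pos hce, if_pos hcf] at hY
      omega
    · have hce : ¬ (hd e ∈ ({v} : Finset V) ∧ tl e ∉ ({v} : Finset V)) :=
        fun h => hvf (by rw [← Finset.mem_singleton.1 h.1, hhead])
      have hcf : ¬ (hd f ∈ ({v} : Finset V) ∧ tl f ∉ ({v} : Finset V)) :=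
        fun h => hvf (Finset.mem_singleton.1 h.1).symm
      rw [if_neg hce, if_neg hcf] at hY
      omega
  · have hY := hH1 {r}
    have hce : ¬ (hd e ∈ ({r} : Finset V) ∧ tl e ∉ ({r} : Finset V)) :=
      fun h => hfr (by rw [← hhead]; exact (Finset.mem_singleton.1 h.1))
    have hcf : ¬ (hd f ∈ ({r} : Finset V) ∧ tl f ∉ ({r} : Finset V)) :=
      fun h => hfr (Finset.mem_singleton.1 h.1)
    rw [if_neg hce, if_neg hcf] at hY
    omega
  · intro Y h1 h2
    have hY := hH1 Y
    have hc := hcut Y h1 h2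
    by_cases hE : hd e ∈ Y ∧ tl e ∉ Y
    · by_cases hFc : hd f ∈ Y ∧ tl f ∉ Y
      · rw [if_pos hE, if_pos hFc] at hY
        omega
      · have hhfY : hd f ∈ Y := hhead ▸ hE.1
        have htfY : tl f ∈ Y := by
          by_contra hcc
          exact hFc ⟨hhfY, hcc⟩
        have hstrict : k + 1 ≤ inDeg hd tl S Y := by
          by_contra hcc
          have htY : inDeg hd tl S Y = k := by omega
          have htight : Tight hd tl S k r Y := ⟨h2, htY⟩
          have harcin : ArcIn hd tl Y f := ⟨hhfY, htfY⟩
          rcases hX with ⟨hXt, hXf, hXmin⟩ | ⟨hno, -⟩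
          · exact hE.2 (hXmin Y htight harcin heX.2)
          · exact hno ⟨Y, htight, harcin⟩
        rw [if_pos hE, if_neg hFc] at hY
        omega
    · rw [if_neg hE] at hY
      by_cases hFc : hd f ∈ Y ∧ tl f ∉ Y
      · rw [if_pos hFc] at hY
        omega
      · rw [if_neg hFc] at hY
        omega
end

section
/- Let $S \in \mathcal{F}_{k,r}$ and $T \in \mathcal{F}_{k,r}$ with $S \setminus T = \{e_1,\dots,e_p\}$, $T \setminus S = \{f_1,\dots,f_p\}$, and $\mathrm{head}(e_i) = \mathrm{head}(f_i)$ for all $i$. For each $i$, let $X_i$ be the minimal tight set with respect to $S$ containing $f_i$ (or $V$ if none exists). Then for every $i \in [p]$ there exists $j \in [p]$ such that $X_i$ contains the arc $e_j$ (both endpoints of $e_j$ lie in $X_i$). -/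
open Finset

variable {V A : Type*}

/-!
Let `Y = X i` be tight for `S` and contain `f i`. Since `S` and `T` have the same indegree at
every vertex, they have equally many arcs with head in `Y`. Such an arc either lies inside `Y`
or enters it; `k` arcs of `S` and at least `k` arcs of `T` enter `Y`, so `S` has at least as many
arcs inside `Y` as `T`. As `f i ∈ T \ S` lies inside `Y`, some arc of `S \ T` must lie inside `Y`
too, and the arcs of `S \ T` are the `e j`.
-/

section

variable {hd tl : A → V}

lemma exists_isPeriodicPt_of_mapsTo {f : V → V} {X : Finset V} (hX : X.Nonempty)
    (hf : Set.MapsTo f X X) : ∃ w ∈ X, ∃ m, 0 < m ∧ Function.IsPeriodicPt f m w := by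
  obtain ⟨v, hv⟩ := hX
  have horbit : ∀ n, f^[n] v ∈ X := fun n => hf.iterate n hv
  obtain ⟨a, b, hab, heq⟩ :=
    X.finite_toSet.exists_lt_map_eq_of_forall_mem (f := fun n => f^[n] v) horbit
  refine ⟨f^[a] v, horbit a, b - a, by omega, ?_⟩
  change f^[b - a] (f^[a] v) = f^[a] v
  rw [← Function.iterate_add_apply, Nat.sub_add_cancel hab.le]
  exact heq.symm

/-- Following in-arcs backwards from a periodic point closes a directed cycle. -/
lemma hasDicycle_of_forall_mem_exists_arc {F : Finset A} {X : Finset V} (hX : X.Nonempty)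
    (h : ∀ v ∈ X, ∃ a ∈ F, hd a = v ∧ tl a ∈ X) : HasDicycle hd tl F := by
  obtain ⟨v, hv⟩ := hX
  have : Nonempty A := ⟨(h v hv).choose⟩
  choose! g hgF hghd hgX using h
  have hmaps : Set.MapsTo (tl ∘ g) X X := fun u hu => hgX u hu
  obtain ⟨w, hw, m, hm, hper⟩ := exists_isPeriodicPt_of_mapsTo ⟨v, hv⟩ hmaps
  have horbit : ∀ n, (tl ∘ g)^[n] w ∈ X := fun n => hmaps.iterate n hw
  refine ⟨m, hm, fun i => (tl ∘ g)^[m - i] w, fun i => g ((tl ∘ g)^[m - (i + 1)] w),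
    fun i => ⟨hgF _ (horbit _), ?_, hghd _ (horbit _)⟩, ?_⟩
  · change (tl ∘ g) ((tl ∘ g)^[m - (i + 1)] w) = (tl ∘ g)^[m - i] w
    rw [← Function.iterate_succ_apply' (tl ∘ g)]
    congr 1
    omega
  · simp only [Fin.val_zero, Fin.val_last, Nat.sub_zero, Nat.sub_self, Function.iterate_zero,
      id]
    exact hper

lemma IsArb.hd_ne_tl [DecidableEq V] {r : V} {P : Finset A} (hP : IsArb hd tl r P) {a : A}
    (ha : a ∈ P) : hd a ≠ tl a := fun h =>
  hP.1 ⟨1, one_pos, fun _ => hd a, fun _ => a, fun _ => ⟨ha, h.symm, rfl⟩, rfl⟩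

lemma IsArb.exists_enters [DecidableEq V] {r : V} {P : Finset A} (hP : IsArb hd tl r P)
    {X : Finset V} (hX : X.Nonempty) (hr : r ∉ X) : ∃ a ∈ P, hd a ∈ X ∧ tl a ∉ X := by
  by_contra! hnone
  refine hP.1 (hasDicycle_of_forall_mem_exists_arc hX fun v hv => ?_)
  have hin := hP.2.1 v (ne_of_mem_of_not_mem hv hr)
  obtain ⟨a, ha⟩ := card_eq_one.mp hin
  have haP := mem_filter.mp (ha ▸ mem_singleton_self a)
  simp only [mem_singleton] at haP
  exact ⟨a, haP.1, haP.2.1, hnone a haP.1 (haP.2.1 ▸ hv)⟩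

lemma IsArb.vDeg_eq_inDeg_singleton [DecidableEq V] {r : V} {P : Finset A}
    (hP : IsArb hd tl r P) (v : V) : vDeg hd P v = inDeg hd tl P {v} := by
  unfold vDeg inDeg
  congr 1
  refine filter_congr fun a ha => ?_
  simp only [mem_singleton]
  exact ⟨fun h => ⟨h, fun h' => hP.hd_ne_tl ha (h.trans h'.symm)⟩, And.left⟩

lemma card_filter_univ_biUnion [DecidableEq A] {k : ℕ} {P : Fin k → Finset A}
    (hP : ∀ i j, i ≠ j → Disjoint (P i) (P j)) (q : A → Prop) [DecidablePred q] :
    #((univ.biUnion P).filter q) = ∑ i, #((P i).filter q) := by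
  rw [filter_biUnion, card_biUnion]
  exact fun i _ j _ hij => (hP i j hij).mono (filter_subset _ _) (filter_subset _ _)

variable [DecidableEq V] [DecidableEq A] {k : ℕ} {r : V} {F : Finset A}

lemma Feasible.vDeg_eq (hF : Feasible hd tl k r F) (v : V) :
    vDeg hd F v = if v = r then 0 else k := by
  obtain ⟨P, hdisj, rfl, harb⟩ := hF
  rw [vDeg, card_filter_univ_biUnion hdisj]
  change ∑ i, vDeg hd (P i) v = _
  simp_rw [fun i => (harb i).vDeg_eq_inDeg_singleton v]
  split_ifs with hv
  · subst hv
    exact sum_eq_zero fun i _ => (harb i).2.2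
  · simp [fun i => (harb i).2.1 v hv]

lemma Feasible.le_inDeg (hF : Feasible hd tl k r F) {X : Finset V}
    (hX : X.Nonempty) (hr : r ∉ X) : k ≤ inDeg hd tl F X := by
  obtain ⟨P, hdisj, rfl, harb⟩ := hF
  rw [inDeg, card_filter_univ_biUnion hdisj]
  calc k = ∑ _i : Fin k, 1 := by simp
    _ ≤ _ := sum_le_sum fun i _ => by
        obtain ⟨a, haP, hin, hout⟩ := (harb i).exists_enters hX hr
        exact card_pos.mpr ⟨a, mem_filter.mpr ⟨haP, hin, hout⟩⟩

end

instance ArcIn.decidablePred [DecidableEq V] (hd tl : A → V) (X : Finset V) :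
    DecidablePred (ArcIn hd tl X) :=
  fun a => inferInstanceAs (Decidable (hd a ∈ X ∧ tl a ∈ X))

section

variable [DecidableEq V] {hd tl : A → V}

lemma card_filter_hd_mem (F : Finset A) (Y : Finset V) :
    #(F.filter (fun a => hd a ∈ Y)) = ∑ v ∈ Y, vDeg hd F v := by
  rw [card_eq_sum_card_fiberwise (f := hd) (s := F.filter fun a => hd a ∈ Y) (t := Y)
    fun a ha => (mem_filter.mp ha).2]
  refine sum_congr rfl fun v hv => ?_
  rw [vDeg, filter_filter]
  congr 1
  exact filter_congr fun a _ => ⟨And.right, fun h => ⟨h ▸ hv, h⟩⟩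

lemma card_filter_hd_mem_eq_add_inDeg (F : Finset A) (Y : Finset V) :
    #(F.filter (fun a => hd a ∈ Y)) = #(F.filter (ArcIn hd tl Y)) + inDeg hd tl F Y := by
  rw [inDeg, ← card_filter_add_card_filter_not (fun a => tl a ∈ Y), filter_filter,
    filter_filter]
  rfl

lemma exists_arcIn_sdiff_of_inDeg_le [DecidableEq A] {S T : Finset A}
    (hdeg : ∀ v, vDeg hd S v = vDeg hd T v) {Y : Finset V}
    (hle : inDeg hd tl S Y ≤ inDeg hd tl T Y) {a : A} (ha : a ∈ T \ S) (haY : ArcIn hd tl Y a) :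
    ∃ b ∈ S \ T, ArcIn hd tl Y b := by
  by_contra! hnone
  have hsub : S.filter (ArcIn hd tl Y) ⊂ T.filter (ArcIn hd tl Y) := by
    refine ssubset_iff_of_subset (fun b hb => ?_) |>.mpr ⟨a, ?_, ?_⟩
    · obtain ⟨hbS, hbY⟩ := mem_filter.mp hb
      by_contra hbT
      exact hnone b (mem_sdiff.mpr ⟨hbS, fun h => hbT (mem_filter.mpr ⟨h, hbY⟩)⟩) hbY
    · exact mem_filter.mpr ⟨(mem_sdiff.mp ha).1, haY⟩
    · exact fun h => (mem_sdiff.mp ha).2 (mem_filter.mp h).1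
  have hheads : #(S.filter (fun a => hd a ∈ Y)) = #(T.filter (fun a => hd a ∈ Y)) := by
    simp only [card_filter_hd_mem, hdeg]
  have := card_lt_card hsub
  rw [card_filter_hd_mem_eq_add_inDeg (tl := tl), card_filter_hd_mem_eq_add_inDeg (tl := tl)]
    at hheads
  omega

end

theorem stmt_3_general [Fintype V] [DecidableEq V] [DecidableEq A] (hd tl : A → V)
    (k p : ℕ) (r : V)
    (S T : Finset A) (hS : Feasible hd tl k r S) (hT : Feasible hd tl k r T)
    (e f : Fin p → A)
    (he_range : S \ T = Finset.image e Finset.univ)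
    (hf_range : T \ S = Finset.image f Finset.univ)
    (X : Fin p → Finset V) (hX : ∀ i : Fin p, MinTightFor hd tl S k r (f i) (X i))
    :
    ∀ i : Fin p, ∃ j : Fin p, ArcIn hd tl (X i) (e j) := by
  intro i
  rcases hX i with ⟨⟨hr, htight⟩, hfX, -⟩ | ⟨-, hXuniv⟩
  · have hfi : f i ∈ T \ S := hf_range ▸ mem_image_of_mem f (mem_univ i)
    obtain ⟨b, hb, hbX⟩ := exists_arcIn_sdiff_of_inDeg_le
      (fun v => by rw [hS.vDeg_eq, hT.vDeg_eq]) (htight ▸ hT.le_inDeg ⟨_, hfX.1⟩ hr) hfi hfX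
    obtain ⟨j, -, rfl⟩ := mem_image.mp (he_range ▸ hb)
    exact ⟨j, hbX⟩
  · exact ⟨i, by simp [ArcIn, hXuniv]⟩

theorem stmt_3 [Fintype V] [DecidableEq V] [DecidableEq A] (hd tl : A → V)
    (k p : ℕ) (r : V)
    (S T : Finset A) (hS : Feasible hd tl k r S) (hT : Feasible hd tl k r T)
    (e f : Fin p → A)
    (he_inj : Function.Injective e) (hf_inj : Function.Injective f)
    (he_range : S \ T = Finset.image e Finset.univ)
    (hf_range : T \ S = Finset.image f Finset.univ)
    (h_heads : ∀ i : Fin p, hd (e i) = hd (f i))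
    (X : Fin p → Finset V) (hX : ∀ i : Fin p, MinTightFor hd tl S k r (f i) (X i))
    :
    ∀ i : Fin p, ∃ j : Fin p, ArcIn hd tl (X i) (e j) :=
  stmt_3_general hd tl k p r S T hS hT e f he_range hf_range X hX
end

section
/- Let $S, T \in \mathcal{F}_{k,r}$ with symmetric difference matched as $e_i, f_i$ ($\mathrm{head}(e_i)=\mathrm{head}(f_i)$), minimal tight sets $X_i$, and auxiliary digraph $H$. Suppose $H$ has a shortest directed cycle of length $q \ge 2$ traversing $1,2,\dots,q$ in this order, and let $Y = X_2 \cup \dots \cup X_q$. Then the arc $e_2$ has its tail in $X_1 \setminus Y$ and its head in $X_1 \cap Y$. -/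
open Finset

variable {V A : Type*}

set_option linter.unusedSectionVars false

section Aux

open Function

variable [Fintype V] [DecidableEq V] [DecidableEq A]

lemma no_selfloop (hd tl : A → V) {F : Finset A} (hF : ¬ HasDicycle hd tl F)
    {a : A} (ha : a ∈ F) (h : tl a = hd a) : False :=
  hF ⟨1, one_pos, fun _ => hd a, fun _ => a, fun _ => ⟨ha, h, rfl⟩, rfl⟩

/-- The parent map of an arborescence (junk value `r` at `r`). -/
noncomputable def arbPar (hd tl : A → V) (r : V) (F : Finset A) (w : V) : V :=
  if h : ∃ a, a ∈ F ∧ hd a = w ∧ tl a ≠ w then tl h.choose else r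

lemma arbPar_root (hd tl : A → V) (r : V) (F : Finset A) (hF : IsArb hd tl r F) :
    arbPar hd tl r F r = r := by
  rw [arbPar, dif_neg]
  rintro ⟨a, haF, hha, hta⟩
  have h0 := hF.2.2
  rw [inDeg, Finset.card_eq_zero] at h0
  have : a ∈ F.filter (fun a => hd a ∈ ({r} : Finset V) ∧ tl a ∉ ({r} : Finset V)) := by
    simp only [Finset.mem_filter, Finset.mem_singleton]
    exact ⟨haF, hha, hta⟩
  rw [h0] at this
  exact absurd this (Finset.notMem_empty a)

lemma arbPar_spec (hd tl : A → V) (r : V) (F : Finset A) (hF : IsArb hd tl r F)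
    {w : V} (hw : w ≠ r) :
    ∃ a, a ∈ F ∧ hd a = w ∧ tl a = arbPar hd tl r F w := by
  have h1 := hF.2.1 w hw
  rw [inDeg, Finset.card_eq_one] at h1
  obtain ⟨b, hb⟩ := h1
  have hbmem : b ∈ F ∧ hd b = w ∧ tl b ≠ w := by
    have hbb : b ∈ F.filter (fun a => hd a ∈ ({w} : Finset V) ∧ tl a ∉ ({w} : Finset V)) := by
      rw [hb]; exact Finset.mem_singleton_self b
    simp only [Finset.mem_filter, Finset.mem_singleton] at hbb
    exact ⟨hbb.1, hbb.2.1, hbb.2.2⟩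
  have hex : ∃ a, a ∈ F ∧ hd a = w ∧ tl a ≠ w := ⟨b, hbmem⟩
  refine ⟨hex.choose, hex.choose_spec.1, hex.choose_spec.2.1, ?_⟩
  rw [arbPar, dif_pos hex]

lemma arbPar_eq (hd tl : A → V) (r : V) (F : Finset A) (hF : IsArb hd tl r F)
    {a : A} (ha : a ∈ F) (hw : hd a ≠ r) : tl a = arbPar hd tl r F (hd a) := by
  obtain ⟨b, hbF, hbh, hbt⟩ := arbPar_spec hd tl r F hF hw
  have h1 := hF.2.1 (hd a) hw
  rw [inDeg, Finset.card_eq_one] at h1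
  obtain ⟨c, hc⟩ := h1
  have hmem : ∀ x, x ∈ F → hd x = hd a → x = c := by
    intro x hxF hxh
    have : x ∈ F.filter (fun y => hd y ∈ ({hd a} : Finset V) ∧ tl y ∉ ({hd a} : Finset V)) := by
      simp only [Finset.mem_filter, Finset.mem_singleton]
      refine ⟨hxF, hxh, fun h => no_selfloop hd tl hF.1 hxF (by rw [h, hxh])⟩
    rw [hc] at this
    exact Finset.mem_singleton.mp this
  have hab : a = b := (hmem a ha rfl).trans (hmem b hbF hbh).symm
  rw [hab, hbt, hbh]

lemma arbPar_iter_root (hd tl : A → V) (r : V) (F : Finset A) (hF : IsArb hd tl r F)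
    (n : ℕ) : (arbPar hd tl r F)^[n] r = r :=
  Function.iterate_fixed (arbPar_root hd tl r F hF) n

lemma arbPar_cycle_false (hd tl : A → V) (r : V) (F : Finset A) (hF : IsArb hd tl r F)
    {x : V} (hx : x ≠ r) {n : ℕ} (hn : 0 < n)
    (h : (arbPar hd tl r F)^[n] x = x) : False := by
  set g := arbPar hd tl r F with hg
  have hner : ∀ j, g^[j] x ≠ r := by
    intro j hj
    have hc : ∀ c : ℕ, g^[c * n] x = x := by
      intro c
      induction c with
      | zero => simp
      | succ c ih =>
        have : (c + 1) * n = c * n + n := by ring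
        rw [this, Function.iterate_add_apply, h, ih]
    have h2 := hc (j + 1)
    have hmul : j + 1 ≤ (j + 1) * n := Nat.le_mul_of_pos_right _ hn
    have hge : (j + 1) * n = ((j + 1) * n - j) + j := by omega
    rw [hge, Function.iterate_add_apply, hj, arbPar_iter_root hd tl r F hF] at h2
    exact hx h2.symm
  refine hF.1 ⟨n, hn, fun j => g^[n - j.val] x,
    fun j => (arbPar_spec hd tl r F hF (hner (n - 1 - j.val))).choose, fun j => ?_, ?_⟩
  · obtain ⟨haF, hhd, htl⟩ := (arbPar_spec hd tl r F hF (hner (n - 1 - j.val))).choose_spec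
    refine ⟨haF, ?_, ?_⟩
    · rw [htl, ← hg]
      simp only [Fin.coe_castSucc]
      have h2 : g^[(n - 1 - j.val) + 1] x = g (g^[n - 1 - j.val] x) :=
        Function.iterate_succ_apply' g _ x
      rw [← h2]
      congr 1
      omega
    · rw [hhd]
      simp only [Fin.val_succ]
      congr 1
      omega
  · simp only [Fin.val_zero, Fin.val_last, Nat.sub_zero, Nat.sub_self]
    rw [h]
    rfl

lemma arbPar_reach (hd tl : A → V) (r : V) (F : Finset A) (hF : IsArb hd tl r F)
    (w : V) : ∃ N, (arbPar hd tl r F)^[N] w = r := by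
  by_contra hcon
  push_neg at hcon
  set g := arbPar hd tl r F with hg
  obtain ⟨a, b, hab, heq⟩ := Fintype.exists_ne_map_eq_of_card_lt
    (fun j : Fin (Fintype.card V + 1) => g^[j.val] w) (by simp)
  have key : ∀ s t : ℕ, s < t → g^[s] w = g^[t] w → False := by
    intro s t hst he
    have h1 : g^[t - s] (g^[s] w) = g^[s] w := by
      rw [← Function.iterate_add_apply]
      have : t - s + s = t := by omega
      rw [this, ← he]
    exact arbPar_cycle_false hd tl r F hF (hcon s) (by omega) h1
  rcases lt_or_gt_of_ne (fun h : a.val = b.val => hab (Fin.ext h)) with h | h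
  · exact key a.val b.val h heq
  · exact key b.val a.val h heq.symm

lemma arb_enter (hd tl : A → V) (r : V) (F : Finset A) (hF : IsArb hd tl r F)
    {Q : Finset V} (hr : r ∉ Q) {w : V} (hw : w ∈ Q) :
    ∃ (c : ℕ) (a : A), a ∈ F ∧ hd a ∈ Q ∧ tl a ∉ Q ∧ hd a = (arbPar hd tl r F)^[c] w ∧
      ∀ j ≤ c, (arbPar hd tl r F)^[j] w ∈ Q := by
  set g := arbPar hd tl r F with hg
  have hex : ∃ n, g^[n] w ∉ Q := by
    obtain ⟨N, hN⟩ := arbPar_reach hd tl r F hF w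
    exact ⟨N, by rw [hN]; exact hr⟩
  set m := Nat.find hex with hmdef
  have hm : g^[m] w ∉ Q := Nat.find_spec hex
  have hmin : ∀ j < m, g^[j] w ∈ Q := fun j hj => not_not.mp (Nat.find_min hex hj)
  have hm0 : m ≠ 0 := by
    intro h0
    rw [h0] at hm
    exact hm hw
  have hz : g^[m - 1] w ∈ Q := hmin _ (by omega)
  have hzr : g^[m - 1] w ≠ r := fun h => hr (h ▸ hz)
  obtain ⟨a, haF, hhd, htl⟩ := arbPar_spec hd tl r F hF hzr
  refine ⟨m - 1, a, haF, by rw [hhd]; exact hz, ?_, hhd, fun j hj => hmin j (by omega)⟩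
  rw [htl, ← hg]
  have h2 : g^[(m - 1) + 1] w = g (g^[m - 1] w) := Function.iterate_succ_apply' g _ w
  rw [← h2]
  have : m - 1 + 1 = m := by omega
  rw [this]
  exact hm

lemma tight_each (hd tl : A → V) {k : ℕ} {r : V} {P : Fin k → Finset A}
    (hdisj : ∀ i j : Fin k, i ≠ j → Disjoint (P i) (P j))
    (hArb : ∀ i, IsArb hd tl r (P i))
    {Q : Finset V} (hr : r ∉ Q) (hQ : inDeg hd tl (Finset.univ.biUnion P) Q = k)
    {w : V} (hw : w ∈ Q) (i : Fin k) :
    ((P i).filter (fun a => hd a ∈ Q ∧ tl a ∉ Q)).card = 1 := by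
  have hsum : (∑ j : Fin k, ((P j).filter (fun a => hd a ∈ Q ∧ tl a ∉ Q)).card) = k := by
    have h1 := hQ
    rw [inDeg, Finset.filter_biUnion, Finset.card_biUnion (fun x _ y _ hxy =>
      Finset.disjoint_filter_filter (hdisj x y hxy))] at h1
    exact h1
  have hge : ∀ j : Fin k, 1 ≤ ((P j).filter (fun a => hd a ∈ Q ∧ tl a ∉ Q)).card := by
    intro j
    obtain ⟨c, a, haF, hin, hout, -, -⟩ := arb_enter hd tl r (P j) (hArb j) hr hw
    exact Finset.card_pos.mpr ⟨a, Finset.mem_filter.mpr ⟨haF, hin, hout⟩⟩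
  by_contra hne
  have hlt : (∑ _j : Fin k, 1) < ∑ j : Fin k, ((P j).filter (fun a => hd a ∈ Q ∧ tl a ∉ Q)).card :=
    Finset.sum_lt_sum (fun j _ => hge j)
      ⟨i, Finset.mem_univ i, lt_of_le_of_ne (hge i) (Ne.symm hne)⟩
  simp only [Finset.sum_const, Finset.card_univ, Fintype.card_fin, smul_eq_mul, mul_one] at hlt
  omega

end Aux
theorem stmt_6 [Fintype V] [DecidableEq V] [DecidableEq A] (hd tl : A → V)
    (k p : ℕ) (r : V)
    (S T : Finset A) (hS : Feasible hd tl k r S) (hT : Feasible hd tl k r T)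
    (e f : Fin p → A)
    (he_inj : Function.Injective e) (hf_inj : Function.Injective f)
    (he_range : S \ T = Finset.image e Finset.univ)
    (hf_range : T \ S = Finset.image f Finset.univ)
    (h_heads : ∀ i : Fin p, hd (e i) = hd (f i))
    (X : Fin p → Finset V) (hX : ∀ i : Fin p, MinTightFor hd tl S k r (f i) (X i))
    (q : ℕ) (hq2 : 2 ≤ q) (hqp : q ≤ p)
    (hcyc : ∀ i : Fin q, ArcIn hd tl (X (Fin.castLE hqp i))
      (e (Fin.castLE hqp ⟨(i.val + 1) % q, Nat.mod_lt _ i.pos⟩)))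
    (hshort : ∀ m : ℕ, 0 < m → m < q → ¬ AuxCycle hd tl X e m)
    :
    tl (e (Fin.castLE hqp ⟨1, by omega⟩)) ∈
        X (Fin.castLE hqp ⟨0, by omega⟩) \
          ((Finset.univ.filter (fun i : Fin q => i ≠ ⟨0, by omega⟩)).biUnion
            (fun i => X (Fin.castLE hqp i))) ∧
      hd (e (Fin.castLE hqp ⟨1, by omega⟩)) ∈
        X (Fin.castLE hqp ⟨0, by omega⟩) ∩
          ((Finset.univ.filter (fun i : Fin q => i ≠ ⟨0, by omega⟩)).biUnion
            (fun i => X (Fin.castLE hqp i))) := by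
  classical
  obtain ⟨P, hPdisj, hPun, hPArb⟩ := hS
  have hq1 : (1 : ℕ) < q := by omega
  have F1 : ∀ l : Fin p, ¬ ArcIn hd tl (X l) (e l) := by
    intro l h
    refine hshort 1 one_pos (by omega) ⟨fun _ => l, fun a b _ => Subsingleton.elim a b, ?_⟩
    intro i
    simpa using h
  have F2 : ∀ l : Fin p, Tight hd tl S k r (X l) ∧ ArcIn hd tl (X l) (f l) := by
    intro l
    rcases hX l with ⟨ht, ha, -⟩ | ⟨-, huniv⟩
    · exact ⟨ht, ha⟩
    · exact absurd (by rw [huniv]; exact ⟨Finset.mem_univ _, Finset.mem_univ _⟩) (F1 l)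
  have F4 : ∀ l : Fin p, hd (e l) ∈ X l := fun l => by
    rw [h_heads l]; exact (F2 l).2.1
  have F5 : ∀ l : Fin p, tl (e l) ∉ X l := fun l h => F1 l ⟨F4 l, h⟩
  have FS : ∀ l : Fin p, e l ∈ S := by
    intro l
    have h1 : e l ∈ S \ T := by
      rw [he_range]; exact Finset.mem_image_of_mem e (Finset.mem_univ l)
    exact (Finset.mem_sdiff.mp h1).1
  have hcyc' : ∀ (s : ℕ) (hs : s < q) (hs1 : s + 1 < q),
      ArcIn hd tl (X (Fin.castLE hqp ⟨s, hs⟩)) (e (Fin.castLE hqp ⟨s + 1, hs1⟩)) := by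
    intro s hs hs1
    have h0 := hcyc ⟨s, hs⟩
    simpa only [Nat.mod_eq_of_lt hs1] using h0
  -- the key claim
  have KEY : ∀ (m : ℕ) (hm : m < q), 1 ≤ m →
      tl (e (Fin.castLE hqp ⟨1, hq1⟩)) ∉ X (Fin.castLE hqp ⟨m, hm⟩) := by
    intro m
    induction m using Nat.strong_induction_on with
    | _ m IH =>
    intro hm h1m htin
    rcases eq_or_lt_of_le h1m with h1 | h2m
    · exact F5 (Fin.castLE hqp ⟨1, hq1⟩) (by subst h1; exact htin)
    · -- m ≥ 2
      set E := e (Fin.castLE hqp ⟨1, hq1⟩) with hE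
      have hES : E ∈ Finset.univ.biUnion P := by rw [hPun]; exact FS _
      obtain ⟨i0, -, hEP⟩ := Finset.mem_biUnion.mp hES
      have hArb0 : IsArb hd tl r (P i0) := hPArb i0
      set g := arbPar hd tl r (P i0) with hg
      set v := hd E with hv
      set t := tl E with ht
      have hvr : v ≠ r := by
        intro hvreq
        have hcard := hArb0.2.2
        rw [inDeg, Finset.card_eq_zero] at hcard
        have hmem : E ∈ (P i0).filter
            (fun a => hd a ∈ ({r} : Finset V) ∧ tl a ∉ ({r} : Finset V)) := by
          simp only [Finset.mem_filter, Finset.mem_singleton]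
          refine ⟨hEP, by rw [← hv]; exact hvreq, ?_⟩
          intro hteq
          exact no_selfloop hd tl hArb0.1 hEP (by rw [hteq, ← hvreq])
        rw [hcard] at hmem
        exact absurd hmem (Finset.notMem_empty _)
      have hparv : g v = t := by
        have h0 := arbPar_eq hd tl r (P i0) hArb0 hEP (by rw [← hv]; exact hvr)
        rw [← hv, ← ht, ← hg] at h0
        exact h0.symm
      -- entry data for each cycle tight set
      have hentry : ∀ s : Fin q, ∃ az, az ∈ P i0 ∧ hd az ∈ X (Fin.castLE hqp s) ∧
          tl az ∉ X (Fin.castLE hqp s) ∧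
          (∀ b, b ∈ P i0 → hd b ∈ X (Fin.castLE hqp s) → tl b ∉ X (Fin.castLE hqp s) → b = az) ∧
          ∀ w ∈ X (Fin.castLE hqp s), ∃ c : ℕ, g^[c] w = hd az ∧
            ∀ j ≤ c, g^[j] w ∈ X (Fin.castLE hqp s) := by
        intro s
        have htight := (F2 (Fin.castLE hqp s)).1
        have hone := tight_each hd tl hPdisj hPArb htight.1
          (by rw [hPun]; exact htight.2) ((F2 (Fin.castLE hqp s)).2.1) i0
        rw [Finset.card_eq_one] at hone
        obtain ⟨az, haz⟩ := hone
        have hazmem : az ∈ (P i0) ∧ hd az ∈ X (Fin.castLE hqp s) ∧ tl az ∉ X (Fin.castLE hqp s) := by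
          have h1 : az ∈ (P i0).filter (fun a => hd a ∈ X (Fin.castLE hqp s) ∧ tl a ∉ X (Fin.castLE hqp s)) := by
            rw [haz]; exact Finset.mem_singleton_self az
          simpa only [Finset.mem_filter] using h1
        refine ⟨az, hazmem.1, hazmem.2.1, hazmem.2.2, ?_, ?_⟩
        · intro b hbF hbin hbout
          have h1 : b ∈ ({az} : Finset A) := by
            rw [← haz]; exact Finset.mem_filter.mpr ⟨hbF, hbin, hbout⟩
          exact Finset.mem_singleton.mp h1
        · intro w hw
          obtain ⟨c, a, haF, hin, hout, hhda, hpre⟩ :=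
            arb_enter hd tl r (P i0) hArb0 htight.1 hw
          have haaz : a = az := by
            have h1 : a ∈ ({az} : Finset A) := by
              rw [← haz]; exact Finset.mem_filter.mpr ⟨haF, hin, hout⟩
            exact Finset.mem_singleton.mp h1
          exact ⟨c, by rw [← haaz, hhda], hpre⟩
      -- entry of X_1 is v
      obtain ⟨a1, ha1F, ha1in, ha1out, huniq1, hent1⟩ := hentry ⟨1, hq1⟩
      have hEa1 : E = a1 := huniq1 E hEP (F4 _) (F5 _)
      have ha1E : hd a1 = v := by rw [← hEa1, ← hv]
      -- claim A : all X_s with 1 ≤ s ≤ m-1 lie below v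
      have claimA : ∀ s : ℕ, 1 ≤ s → s + 1 ≤ m → ∀ (hsq : s < q),
          ∀ w ∈ X (Fin.castLE hqp ⟨s, hsq⟩), ∃ d : ℕ, g^[d] w = v := by
        intro s
        induction s with
        | zero => omega
        | succ s IHs =>
          intro h1 h2 hsq w hw
          rcases Nat.eq_zero_or_pos s with hs0 | hs1
          · subst hs0
            obtain ⟨c, hc, -⟩ := hent1 w hw
            exact ⟨c, by rw [hc, ha1E]⟩
          · have hsq' : s < q := by omega
            have harc := hcyc' s hsq' hsq
            obtain ⟨d', hd'⟩ := IHs hs1 (by omega) hsq' _ harc.1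
            obtain ⟨az, hazF, hazin, hazout, huniq, hent⟩ := hentry ⟨s + 1, hsq⟩
            obtain ⟨cs, hcs, hpres⟩ := hent _ (F4 (Fin.castLE hqp ⟨s + 1, hsq⟩))
            rcases le_or_gt cs d' with hle | hlt
            · obtain ⟨cw, hcw, -⟩ := hent w hw
              refine ⟨(d' - cs) + cw, ?_⟩
              rw [Function.iterate_add_apply, hcw]
              have h3 : g^[(d' - cs) + cs] (hd (e (Fin.castLE hqp ⟨s + 1, hsq⟩))) = v := by
                rw [show d' - cs + cs = d' by omega]; exact hd'
              rw [Function.iterate_add_apply, hcs] at h3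
              exact h3
            · exfalso
              have hteq : g^[d' + 1] (hd (e (Fin.castLE hqp ⟨s + 1, hsq⟩))) = t := by
                rw [Function.iterate_succ_apply', hd', hparv]
              have htmem : t ∈ X (Fin.castLE hqp ⟨s + 1, hsq⟩) := by
                rw [← hteq]; exact hpres (d' + 1) (by omega)
              exact IH (s + 1) (by omega) hsq (by omega) htmem
      -- final argument
      have hm1q : m - 1 < q := by omega
      have hm1q' : m - 1 + 1 < q := by omega
      have harc := hcyc' (m - 1) hm1q hm1q'
      have hidx : (⟨m - 1 + 1, hm1q'⟩ : Fin q) = ⟨m, hm⟩ := Fin.ext (show m - 1 + 1 = m by omega)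
      rw [hidx] at harc
      obtain ⟨d, hdv⟩ := claimA (m - 1) (by omega) (by omega) hm1q _ harc.1
      obtain ⟨az, hazF, hazin, hazout, huniq, hent⟩ := hentry ⟨m, hm⟩
      obtain ⟨c0, hc0, hpre0⟩ := hent _ (F4 (Fin.castLE hqp ⟨m, hm⟩))
      obtain ⟨ct, hct, -⟩ := hent t htin
      rcases le_or_gt c0 d with hle | hlt
      · -- dicycle contradiction
        have h1 : g^[d - c0] (hd az) = v := by
          have h2 : g^[(d - c0) + c0] (hd (e (Fin.castLE hqp ⟨m, hm⟩))) = v := by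
            rw [show d - c0 + c0 = d by omega]; exact hdv
          rw [Function.iterate_add_apply, hc0] at h2
          exact h2
        have h2 : g^[(d - c0) + ct] t = v := by
          rw [Function.iterate_add_apply, hct]; exact h1
        have h3 : g^[((d - c0) + ct) + 1] v = v := by
          rw [Function.iterate_succ_apply, hparv]; exact h2
        exact arbPar_cycle_false hd tl r (P i0) hArb0 hvr (by omega) h3
      · -- chord gives a shorter cycle
        have hvmem : v ∈ X (Fin.castLE hqp ⟨m, hm⟩) := by
          rw [← hdv]; exact hpre0 d (by omega)
        refine hshort m (by omega) hm
          ⟨fun j => Fin.castLE hqp ⟨j.val + 1, by have := j.isLt; omega⟩, ?_, ?_⟩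
        · intro a b hab
          have h1 := congrArg Fin.val hab
          simp only [Fin.coe_castLE] at h1
          exact Fin.ext (by omega)
        · intro j
          rcases Nat.lt_or_ge (j.val + 1) m with hjm | hjge
          · have hmod : (j.val + 1) % m = j.val + 1 := Nat.mod_eq_of_lt hjm
            simp only [hmod]
            exact hcyc' (j.val + 1) (by have := j.isLt; omega) (by have := j.isLt; omega)
          · have hjm : j.val + 1 = m := Nat.le_antisymm (Nat.succ_le_of_lt j.isLt) hjge
            have hmod : (j.val + 1) % m = 0 := by rw [hjm]; exact Nat.mod_self m
            simp only [hmod, Nat.zero_add]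
            simp only [hjm]
            exact ⟨hvmem, htin⟩
  -- assemble the goal
  have h0 := hcyc' 0 (by omega) hq1
  refine ⟨Finset.mem_sdiff.mpr ⟨h0.2, ?_⟩, Finset.mem_inter.mpr ⟨h0.1, ?_⟩⟩
  · intro hmem
    obtain ⟨i, hifil, hti⟩ := Finset.mem_biUnion.mp hmem
    have hine : i ≠ ⟨0, by omega⟩ := (Finset.mem_filter.mp hifil).2
    have h1le : 1 ≤ i.val := by
      rcases Nat.eq_zero_or_pos i.val with hz | hpos
      · exact absurd (Fin.ext hz) hine
      · exact hpos
    exact KEY i.val i.isLt h1le hti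
  · refine Finset.mem_biUnion.mpr ⟨⟨1, hq1⟩, ?_, F4 (Fin.castLE hqp ⟨1, hq1⟩)⟩
    simp only [Finset.mem_filter]
    refine ⟨Finset.mem_univ _, ?_⟩
    simp only [ne_eq, Fin.mk.injEq]
    omega
end

section
/- Let $D=(V,A)$ be a digraph, $k$ a positive integer, and $S, T \in \mathcal{F}_k$ (arc sets partitionable into $k$ arc-disjoint arborescences with possibly distinct roots). If $\delta^-_S(v) \neq \delta^-_T(v)$ for some vertex $v$, then there exist arcs $e \in S \setminus T$ and $f \in T \setminus S$ such that $S - e + f \in \mathcal{F}_k$. -/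
open Finset

variable {V A : Type*}

set_option linter.unusedSectionVars false
set_option linter.unusedVariables false
set_option maxHeartbeats 1000000

/-- Chase lemma: if every vertex of a nonempty set `X` has an incoming arc of `F`
with tail in `X`, then `F` has a dicycle. -/
lemma AX_chase [DecidableEq V] (hd tl : A → V) (F : Finset A) (X : Finset V)
    (hX : X.Nonempty) (h : ∀ x ∈ X, ∃ a, a ∈ F ∧ hd a = x ∧ tl a ∈ X) :
    HasDicycle hd tl F := by
  classical
  obtain ⟨x0, hx0⟩ := hX
  obtain ⟨a0, ha0⟩ := h x0 hx0
  let g : V → A := fun x => if hx : x ∈ X then Classical.choose (h x hx) else a0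
  have hgF : ∀ x ∈ X, g x ∈ F ∧ hd (g x) = x ∧ tl (g x) ∈ X := by
    intro x hx
    simpa [g, dif_pos hx] using Classical.choose_spec (h x hx)
  let t : V → V := fun x => tl (g x)
  let seq : ℕ → V := fun m => t^[m] x0
  have hseqX : ∀ m, seq m ∈ X := by
    intro m
    induction m with
    | zero => exact hx0
    | succ m ih =>
      have : seq (m + 1) = t (seq m) := Function.iterate_succ_apply' t m x0
      rw [this]
      exact (hgF _ ih).2.2
  have hstep : ∀ m, seq (m + 1) = tl (g (seq m)) := by
    intro m; exact Function.iterate_succ_apply' t m x0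
  -- pigeonhole
  have hpig : ∃ i ∈ Finset.range (X.card + 1), ∃ j ∈ Finset.range (X.card + 1),
      i ≠ j ∧ seq i = seq j := by
    exact Finset.exists_ne_map_eq_of_card_lt_of_maps_to
      (s := Finset.range (X.card + 1)) (t := X) (by simp) (fun m _ => hseqX m)
  obtain ⟨i, -, j, -, hij, hseqij⟩ := hpig
  -- wlog i < j
  obtain ⟨i, j, hlt, hseqij⟩ : ∃ i j : ℕ, i < j ∧ seq i = seq j := by
    rcases lt_or_gt_of_ne hij with h' | h'
    · exact ⟨i, j, h', hseqij⟩
    · exact ⟨j, i, h', hseqij.symm⟩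
  refine ⟨j - i, by omega, fun l => seq (j - l.val), fun l => g (seq (j - l.val - 1)), ?_, ?_⟩
  · intro l
    have hl : l.val < j - i := l.isLt
    have h1 : j - l.val - 1 + 1 = j - l.val := by omega
    have hX1 : seq (j - l.val - 1) ∈ X := hseqX _
    obtain ⟨hF, hhd, -⟩ := hgF _ hX1
    refine ⟨hF, ?_, ?_⟩
    · show tl (g (seq (j - l.val - 1))) = seq (j - (l.castSucc).val)
      rw [← hstep, h1]
      rfl
    · show hd (g (seq (j - l.val - 1))) = seq (j - (l.succ).val)
      rw [hhd]
      have hv : j - (l.succ).val = j - l.val - 1 := by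
        simp [Fin.val_succ, Nat.sub_sub]
      rw [hv]
  · show seq (j - 0) = seq (j - (j - i))
    have h1 : j - 0 = j := by omega
    have h2 : j - (j - i) = i := by omega
    rw [h1, h2, hseqij]

/-- A loop yields a dicycle. -/
lemma AX_loop_dicycle (hd tl : A → V) (F : Finset A) (a : A) (ha : a ∈ F)
    (hloop : tl a = hd a) : HasDicycle hd tl F := by
  refine ⟨1, one_pos, fun _ => hd a, fun _ => a, fun i => ⟨ha, hloop, rfl⟩, rfl⟩

/-- Dicycle in `insert a F`: either some arc of `insert a F` has tail `hd a`,
or `F` itself has a dicycle. -/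
lemma AX_dicycle_insert [DecidableEq A] (hd tl : A → V) (F : Finset A) (a : A)
    (h : HasDicycle hd tl (insert a F)) :
    (∃ b ∈ insert a F, tl b = hd a) ∨ HasDicycle hd tl F := by
  obtain ⟨n, hn, v, e, he, hclose⟩ := h
  by_cases hex : ∃ i, e i = a
  · obtain ⟨i, hi⟩ := hex
    left
    set i' : Fin n := ⟨(i.val + 1) % n, Nat.mod_lt _ hn⟩ with hi'
    refine ⟨e i', (he i').1, ?_⟩
    have h1 : tl (e i') = v i'.castSucc := (he i').2.1
    have h2 : hd a = v i.succ := by rw [← hi]; exact (he i).2.2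
    rw [h1, h2]
    by_cases hcase : i.val + 1 < n
    · congr 1
      apply Fin.ext
      simp [hi', Fin.val_succ, Nat.mod_eq_of_lt hcase]
    · have hival : i.val + 1 = n := by have := i.isLt; omega
      have e1 : i'.castSucc = (0 : Fin (n + 1)) := by
        apply Fin.ext
        simp [hi', hival]
      have e2 : i.succ = Fin.last n := by
        apply Fin.ext
        simp [Fin.val_succ, hival]
      rw [e1, e2, hclose]
  · right
    push_neg at hex
    refine ⟨n, hn, v, e, fun i => ⟨?_, (he i).2.1, (he i).2.2⟩, hclose⟩
    have := (he i).1
    rw [Finset.mem_insert] at this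
    exact this.resolve_left (hex i)

section Basics

variable [DecidableEq V] [DecidableEq A] (hd tl : A → V)

/-- Arborescences have no loops. -/
lemma AX_arb_no_loop {r : V} {F : Finset A} (hF : IsArb hd tl r F) :
    ∀ a ∈ F, tl a ≠ hd a := by
  intro a ha hloop
  exact hF.1 (AX_loop_dicycle hd tl F a ha hloop)

/-- In an arborescence, at most one arc has a given head. -/
lemma AX_arb_head_inj {r : V} {F : Finset A} (hF : IsArb hd tl r F) :
    ∀ a ∈ F, ∀ b ∈ F, hd a = hd b → a = b := by
  intro a ha b hb hab
  have hno := AX_arb_no_loop hd tl hF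
  have hmem : ∀ c ∈ F, hd c = hd a →
      c ∈ F.filter (fun c => hd c ∈ ({hd a} : Finset V) ∧ tl c ∉ ({hd a} : Finset V)) := by
    intro c hc hch
    simp only [Finset.mem_filter, Finset.mem_singleton]
    exact ⟨hc, hch, by rw [← hch]; exact hno c hc⟩
  by_cases hr : hd a = r
  · exfalso
    have h0 : inDeg hd tl F {r} = 0 := hF.2.2
    have hmem2 : a ∈ F.filter (fun c => hd c ∈ ({hd a} : Finset V) ∧ tl c ∉ ({hd a} : Finset V)) :=
      hmem a ha rfl
    rw [← hr] at h0
    unfold inDeg at h0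
    have := Finset.card_pos.mpr ⟨a, hmem2⟩
    omega
  · have h1 : inDeg hd tl F {hd a} = 1 := hF.2.1 _ hr
    unfold inDeg at h1
    rw [Finset.card_eq_one] at h1
    obtain ⟨c, hc⟩ := h1
    have h2 := hmem a ha rfl
    have h3 := hmem b hb hab.symm
    rw [hc, Finset.mem_singleton] at h2 h3
    rw [h2, h3]

lemma AX_arb_vDeg_le_one {r : V} {F : Finset A} (hF : IsArb hd tl r F) (v : V) :
    vDeg hd F v ≤ 1 := by
  unfold vDeg
  rw [Finset.card_le_one]
  intro a ha b hb
  simp only [Finset.mem_filter] at ha hb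
  exact AX_arb_head_inj hd tl hF a ha.1 b hb.1 (ha.2.trans hb.2.symm)

lemma AX_arb_hd_ne_root {r : V} {F : Finset A} (hF : IsArb hd tl r F) :
    ∀ a ∈ F, hd a ≠ r := by
  intro a ha har
  have h0 : inDeg hd tl F {r} = 0 := hF.2.2
  unfold inDeg at h0
  have hmem2 : a ∈ F.filter (fun c => hd c ∈ ({r} : Finset V) ∧ tl c ∉ ({r} : Finset V)) := by
    simp only [Finset.mem_filter, Finset.mem_singleton]
    refine ⟨ha, har, ?_⟩
    rw [← har]
    exact AX_arb_no_loop hd tl hF a ha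
  have := Finset.card_pos.mpr ⟨a, hmem2⟩
  omega

/-- A spanning arborescence has `|V| - 1` arcs: `card F + 1 = card V`. -/
lemma AX_arb_card [Fintype V] {r : V} {F : Finset A} (hF : IsArb hd tl r F) :
    F.card + 1 = Fintype.card V := by
  have himg : F.image hd = Finset.univ.erase r := by
    apply Finset.Subset.antisymm
    · intro w hw
      rw [Finset.mem_image] at hw
      obtain ⟨a, ha, rfl⟩ := hw
      exact Finset.mem_erase.mpr ⟨AX_arb_hd_ne_root hd tl hF a ha, Finset.mem_univ _⟩
    · intro w hw
      rw [Finset.mem_erase] at hw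
      have h1 : inDeg hd tl F {w} = 1 := hF.2.1 _ hw.1
      unfold inDeg at h1
      rw [Finset.card_eq_one] at h1
      obtain ⟨c, hc⟩ := h1
      have : c ∈ F.filter (fun a => hd a ∈ ({w} : Finset V) ∧ tl a ∉ ({w} : Finset V)) := by
        rw [hc]; exact Finset.mem_singleton_self c
      simp only [Finset.mem_filter, Finset.mem_singleton] at this
      rw [Finset.mem_image]
      exact ⟨c, this.1, this.2.1⟩
  have hcard : F.card = (F.image hd).card := by
    rw [Finset.card_image_of_injOn]
    intro a ha b hb hab
    exact AX_arb_head_inj hd tl hF a ha b hb hab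
  rw [hcard, himg, Finset.card_erase_of_mem (Finset.mem_univ r), Finset.card_univ]
  have : 0 < Fintype.card V := Fintype.card_pos_iff.mpr ⟨r⟩
  omega

/-- A (not nec. spanning) arborescence induces fewer than `|X|` arcs in any nonempty `X`. -/
lemma AX_arb_induced_lt {r : V} {F : Finset A} (hF : IsArb hd tl r F)
    (X : Finset V) (hX : X.Nonempty) :
    (F.filter (fun a => hd a ∈ X ∧ tl a ∈ X)).card < X.card := by
  set G := F.filter (fun a => hd a ∈ X ∧ tl a ∈ X) with hG
  have hsub : G.image hd ⊆ X := by
    intro w hw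
    rw [Finset.mem_image] at hw
    obtain ⟨a, ha, rfl⟩ := hw
    rw [hG, Finset.mem_filter] at ha
    exact ha.2.1
  have hcard : G.card = (G.image hd).card := by
    rw [Finset.card_image_of_injOn]
    intro a ha b hb hab
    simp only [Finset.mem_coe, hG, Finset.mem_filter] at ha hb
    exact AX_arb_head_inj hd tl hF a ha.1 b hb.1 hab
  rw [hcard]
  rcases lt_or_eq_of_le (Finset.card_le_card hsub) with h | h
  · exact h
  · exfalso
    have himg : G.image hd = X := Finset.eq_of_subset_of_card_le hsub (le_of_eq h.symm)
    apply hF.1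
    apply AX_chase hd tl F X hX
    intro x hx
    rw [← himg, Finset.mem_image] at hx
    obtain ⟨a, ha, rfl⟩ := hx
    rw [hG, Finset.mem_filter] at ha
    exact ⟨a, ha.1, rfl, ha.2.2⟩

end Basics

section FeasFacts

variable [DecidableEq V] [DecidableEq A] (hd tl : A → V)

lemma AX_card_filter_biUnion {k : ℕ} (P : Fin k → Finset A)
    (hdis : ∀ i j : Fin k, i ≠ j → Disjoint (P i) (P j)) (p : A → Prop) [DecidablePred p] :
    ((Finset.univ.biUnion P).filter p).card = ∑ i, ((P i).filter p).card := by
  rw [Finset.filter_biUnion]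
  exact Finset.card_biUnion (fun i _ j _ hij =>
    Finset.disjoint_filter_filter (hdis i j hij))

variable {hd tl} {k : ℕ} {S : Finset A} (hS : FeasibleAny hd tl k S)

include hS

lemma AX_feas_no_loop : ∀ a ∈ S, tl a ≠ hd a := by
  obtain ⟨P, hdis, hun, harb⟩ := hS
  intro a ha
  rw [← hun, Finset.mem_biUnion] at ha
  obtain ⟨i, -, hai⟩ := ha
  obtain ⟨r, hr⟩ := harb i
  exact AX_arb_no_loop hd tl hr a hai

lemma AX_feas_vDeg_le (v : V) : vDeg hd S v ≤ k := by
  obtain ⟨P, hdis, hun, harb⟩ := hS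
  unfold vDeg
  rw [← hun, AX_card_filter_biUnion P hdis]
  calc ∑ i, ((P i).filter (fun a => hd a = v)).card ≤ ∑ _i : Fin k, 1 := by
        apply Finset.sum_le_sum
        intro i _
        obtain ⟨r, hr⟩ := harb i
        exact AX_arb_vDeg_le_one hd tl hr v
    _ = k := by simp

lemma AX_feas_card [Fintype V] : S.card + k = k * Fintype.card V := by
  obtain ⟨P, hdis, hun, harb⟩ := hS
  have hcard : S.card = ∑ i, (P i).card := by
    rw [← hun]
    exact Finset.card_biUnion (fun i _ j _ hij => hdis i j hij)
  have heach : ∀ i : Fin k, (P i).card + 1 = Fintype.card V := by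
    intro i
    obtain ⟨r, hr⟩ := harb i
    exact AX_arb_card hd tl hr
  rw [hcard]
  calc (∑ i, (P i).card) + k = ∑ i : Fin k, ((P i).card + 1) := by
        rw [Finset.sum_add_distrib]; simp
    _ = ∑ _i : Fin k, Fintype.card V := by
        apply Finset.sum_congr rfl; intro i _; exact heach i
    _ = k * Fintype.card V := by simp [Finset.sum_const, mul_comm]

lemma AX_feas_sparse (X : Finset V) (hX : X.Nonempty) :
    (S.filter (fun a => hd a ∈ X ∧ tl a ∈ X)).card + k ≤ k * X.card := by
  obtain ⟨P, hdis, hun, harb⟩ := hS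
  rw [← hun, AX_card_filter_biUnion P hdis]
  have heach : ∀ i : Fin k, ((P i).filter (fun a => hd a ∈ X ∧ tl a ∈ X)).card + 1 ≤ X.card := by
    intro i
    obtain ⟨r, hr⟩ := harb i
    exact AX_arb_induced_lt hd tl hr X hX
  calc (∑ i, ((P i).filter (fun a => hd a ∈ X ∧ tl a ∈ X)).card) + k
      = ∑ i : Fin k, (((P i).filter (fun a => hd a ∈ X ∧ tl a ∈ X)).card + 1) := by
        rw [Finset.sum_add_distrib]; simp
    _ ≤ ∑ _i : Fin k, X.card := Finset.sum_le_sum (fun i _ => heach i)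
    _ = k * X.card := by simp [mul_comm]

end FeasFacts

section Edmonds

variable {U E : Type*} [Fintype U] [DecidableEq U] [DecidableEq E]
variable (hd tl : E → U) (r : U)

lemma AX_inDeg_submod (B : Finset E) (X Y : Finset U) :
    inDeg hd tl B (X ∪ Y) + inDeg hd tl B (X ∩ Y) ≤
      inDeg hd tl B X + inDeg hd tl B Y := by
  classical
  unfold inDeg
  rw [Finset.card_filter, Finset.card_filter, Finset.card_filter, Finset.card_filter,
    ← Finset.sum_add_distrib, ← Finset.sum_add_distrib]
  apply Finset.sum_le_sum
  intro a _
  by_cases h1 : hd a ∈ X <;> by_cases h2 : hd a ∈ Y <;>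
    by_cases h3 : tl a ∈ X <;> by_cases h4 : tl a ∈ Y <;>
    simp [Finset.mem_union, Finset.mem_inter, h1, h2, h3, h4]

/-- If no arc of `F` has its head in `X`, the indegree of `X` w.r.t. `B \ F`
equals that w.r.t. `B`. -/
lemma AX_inDeg_sdiff_eq (B F : Finset E) (X : Finset U)
    (h : ∀ a ∈ F, hd a ∉ X) :
    inDeg hd tl (B \ F) X = inDeg hd tl B X := by
  unfold inDeg
  congr 1
  ext a
  simp only [Finset.mem_filter, Finset.mem_sdiff]
  constructor
  · rintro ⟨⟨hB, -⟩, hp⟩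
    exact ⟨hB, hp⟩
  · rintro ⟨hB, hp⟩
    exact ⟨⟨hB, fun hF => h a hF hp.1⟩, hp⟩

lemma AX_inDeg_erase_ge (B : Finset E) (a : E) (X : Finset U) :
    inDeg hd tl B X ≤ inDeg hd tl (B.erase a) X + 1 := by
  unfold inDeg
  rw [Finset.filter_erase]
  have := Finset.pred_card_le_card_erase
    (s := B.filter (fun b => hd b ∈ X ∧ tl b ∉ X)) (a := a)
  omega

lemma AX_inDeg_erase_eq (B : Finset E) (a : E) (X : Finset U)
    (h : ¬ (hd a ∈ X ∧ tl a ∉ X)) :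
    inDeg hd tl (B.erase a) X = inDeg hd tl B X := by
  unfold inDeg
  rw [Finset.filter_erase, Finset.erase_eq_of_notMem]
  rw [Finset.mem_filter]
  rintro ⟨-, hm⟩
  exact h hm

/-- Invariant for a partial arborescence rooted at `r`. -/
def AXPartial (F : Finset E) : Prop :=
  (∀ a ∈ F, tl a ∈ insert r (F.image hd)) ∧ (∀ v : U, vDeg hd F v ≤ 1) ∧
    vDeg hd F r = 0 ∧ ¬ HasDicycle hd tl F

lemma AX_vDeg_insert (F : Finset E) (a : E) (v : U) :
    vDeg hd (insert a F) v ≤ vDeg hd F v + 1 := by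
  unfold vDeg
  rw [Finset.filter_insert]
  split
  · exact (Finset.card_insert_le _ _)
  · omega

lemma AX_vDeg_insert_ne (F : Finset E) (a : E) (v : U) (h : hd a ≠ v) :
    vDeg hd (insert a F) v = vDeg hd F v := by
  unfold vDeg
  rw [Finset.filter_insert, if_neg h]

lemma AX_vDeg_zero_of_not_mem_image (F : Finset E) (v : U) (h : v ∉ F.image hd) :
    vDeg hd F v = 0 := by
  unfold vDeg
  rw [Finset.card_eq_zero, Finset.filter_eq_empty_iff]
  intro a ha hav
  exact h (Finset.mem_image.mpr ⟨a, ha, hav⟩)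

/-- One growth step. -/
lemma AX_step (k : ℕ) (B : Finset E)
    (hcut : ∀ X : Finset U, X.Nonempty → r ∉ X → k + 1 ≤ inDeg hd tl B X)
    (F : Finset E) (hFB : F ⊆ B) (hpart : AXPartial hd tl r F)
    (hmaint : ∀ X : Finset U, X.Nonempty → r ∉ X → k ≤ inDeg hd tl (B \ F) X)
    (hW : insert r (F.image hd) ≠ Finset.univ) :
    ∃ a ∈ B \ F, tl a ∈ insert r (F.image hd) ∧ hd a ∉ insert r (F.image hd) ∧
      (∀ X : Finset U, X.Nonempty → r ∉ X → k ≤ inDeg hd tl (B \ insert a F) X) := by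
  classical
  set W : Finset U := insert r (F.image hd) with hWdef
  have hWc : (Finset.univ \ W).Nonempty := by
    rw [Finset.sdiff_nonempty]
    intro hsub
    exact hW (Finset.Subset.antisymm (Finset.subset_univ _) hsub)
  have hrW : r ∈ W := Finset.mem_insert_self r _
  have hheadW : ∀ a ∈ F, hd a ∈ W :=
    fun a ha => Finset.mem_insert_of_mem (Finset.mem_image_of_mem hd ha)
  -- indegree into subsets of the complement of W is unaffected by F
  have hcomp : ∀ Z : Finset U, Z ⊆ Finset.univ \ W →
      inDeg hd tl (B \ F) Z = inDeg hd tl B Z := by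
    intro Z hZ
    apply AX_inDeg_sdiff_eq
    intro a ha haZ
    have := hZ haZ
    rw [Finset.mem_sdiff] at this
    exact this.2 (hheadW a ha)
  -- the family of "blocking" tight sets
  set T : Finset (Finset U) := Finset.univ.filter (fun Y : Finset U =>
    Y.Nonempty ∧ r ∉ Y ∧ inDeg hd tl (B \ F) Y = k ∧ (Y ∩ (Finset.univ \ W)).Nonempty)
    with hT
  by_cases hTe : T.Nonempty
  · -- pick a minimum-cardinality tight set X
    obtain ⟨X, hXT, hXmin⟩ := T.exists_min_image Finset.card hTe
    rw [hT, Finset.mem_filter] at hXT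
    obtain ⟨-, hXne, hXr, hXtight, hXWc⟩ := hXT
    set Z : Finset U := X ∩ (Finset.univ \ W) with hZdef
    have hZr : r ∉ Z := fun h => hXr (Finset.mem_inter.mp h).1
    have hZsub : Z ⊆ Finset.univ \ W := Finset.inter_subset_right
    have hZcut : k + 1 ≤ inDeg hd tl (B \ F) Z := by
      rw [hcomp Z hZsub]; exact hcut Z hXWc hZr
    -- split the arcs entering Z
    have hsplit : (B \ F).filter (fun a => hd a ∈ Z ∧ tl a ∉ Z) ⊆
        ((B \ F).filter (fun a => hd a ∈ Z ∧ tl a ∈ X ∩ W)) ∪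
        ((B \ F).filter (fun a => hd a ∈ X ∧ tl a ∉ X)) := by
      intro a ha
      rw [Finset.mem_filter] at ha
      obtain ⟨haBF, hhdZ, htlZ⟩ := ha
      rw [Finset.mem_union, Finset.mem_filter, Finset.mem_filter]
      by_cases htlX : tl a ∈ X
      · left
        refine ⟨haBF, hhdZ, ?_⟩
        rw [Finset.mem_inter]
        refine ⟨htlX, ?_⟩
        by_contra htlW
        exact htlZ (by rw [hZdef, Finset.mem_inter]; exact ⟨htlX, by simp [htlW]⟩)
      · right
        exact ⟨haBF, (Finset.mem_inter.mp (hZdef ▸ hhdZ)).1, htlX⟩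
    have hcard : k + 1 ≤ ((B \ F).filter (fun a => hd a ∈ Z ∧ tl a ∈ X ∩ W)).card
        + ((B \ F).filter (fun a => hd a ∈ X ∧ tl a ∉ X)).card := by
      calc k + 1 ≤ inDeg hd tl (B \ F) Z := hZcut
        _ ≤ _ := by
            unfold inDeg
            exact le_trans (Finset.card_le_card hsplit) (Finset.card_union_le _ _)
    have hXdeg : ((B \ F).filter (fun a => hd a ∈ X ∧ tl a ∉ X)).card = k := hXtight
    have hpos : 0 < ((B \ F).filter (fun a => hd a ∈ Z ∧ tl a ∈ X ∩ W)).card := by omega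
    rw [Finset.card_pos] at hpos
    obtain ⟨a, ha⟩ := hpos
    rw [Finset.mem_filter] at ha
    obtain ⟨haBF, hhdZ, htlXW⟩ := ha
    have hhdX : hd a ∈ X := (Finset.mem_inter.mp (hZdef ▸ hhdZ)).1
    have hhdW : hd a ∉ W := by
      have := (Finset.mem_inter.mp (hZdef ▸ hhdZ)).2
      exact (Finset.mem_sdiff.mp this).2
    have htlW : tl a ∈ W := (Finset.mem_inter.mp htlXW).2
    have htlX : tl a ∈ X := (Finset.mem_inter.mp htlXW).1
    refine ⟨a, haBF, htlW, hhdW, ?_⟩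
    -- maintenance
    intro Y hYne hYr
    have hBia : B \ insert a F = (B \ F).erase a := by
      rw [Finset.sdiff_insert]
    rw [hBia]
    by_cases henter : hd a ∈ Y ∧ tl a ∉ Y
    · -- a enters Y; show Y was not tight
      by_cases htightY : inDeg hd tl (B \ F) Y = k
      · -- Y tight: contradiction via uncrossing
        exfalso
        have hYT : Y ∈ T := by
          rw [hT, Finset.mem_filter]
          refine ⟨Finset.mem_univ _, hYne, hYr, htightY, ⟨hd a, ?_⟩⟩
          rw [Finset.mem_inter, Finset.mem_sdiff]
          exact ⟨henter.1, Finset.mem_univ _, hhdW⟩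
        -- uncross X and Y
        have hXY : (X ∩ Y).Nonempty := ⟨hd a, Finset.mem_inter.mpr ⟨hhdX, henter.1⟩⟩
        have hXYr : r ∉ X ∩ Y := fun h => hXr (Finset.mem_inter.mp h).1
        have hXuYr : r ∉ X ∪ Y := by
          rw [Finset.mem_union]; rintro (h | h); exacts [hXr h, hYr h]
        have hXuYne : (X ∪ Y).Nonempty := hXne.mono Finset.subset_union_left
        have hsub := AX_inDeg_submod hd tl (B \ F) X Y
        have hi1 := hmaint (X ∩ Y) hXY hXYr
        have hi2 := hmaint (X ∪ Y) hXuYne hXuYr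
        have hinter_tight : inDeg hd tl (B \ F) (X ∩ Y) = k := by omega
        have hXYT : X ∩ Y ∈ T := by
          rw [hT, Finset.mem_filter]
          refine ⟨Finset.mem_univ _, hXY, hXYr, hinter_tight, ⟨hd a, ?_⟩⟩
          rw [Finset.mem_inter, Finset.mem_inter, Finset.mem_sdiff]
          exact ⟨⟨hhdX, henter.1⟩, Finset.mem_univ _, hhdW⟩
        have hmin := hXmin _ hXYT
        have hXXY : X ∩ Y = X := by
          apply Finset.eq_of_subset_of_card_le Finset.inter_subset_left
          omega
        have hXsubY : X ⊆ Y := by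
          rw [← hXXY]; exact Finset.inter_subset_right
        exact henter.2 (hXsubY htlX)
      · have hge := hmaint Y hYne hYr
        have h1 := AX_inDeg_erase_ge hd tl (B \ F) a Y
        omega
    · rw [AX_inDeg_erase_eq hd tl _ a Y henter]
      exact hmaint Y hYne hYr
  · -- no blocking tight set: any arc from W to its complement works
    have hWcr : r ∉ Finset.univ \ W := by
      rw [Finset.mem_sdiff]; rintro ⟨-, h⟩; exact h hrW
    have hcut' : k + 1 ≤ inDeg hd tl (B \ F) (Finset.univ \ W) := by
      rw [hcomp _ (Finset.Subset.refl _)]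
      exact hcut _ hWc hWcr
    have hpos : 0 < ((B \ F).filter
        (fun a => hd a ∈ Finset.univ \ W ∧ tl a ∉ Finset.univ \ W)).card := by
      unfold inDeg at hcut'; omega
    rw [Finset.card_pos] at hpos
    obtain ⟨a, ha⟩ := hpos
    rw [Finset.mem_filter] at ha
    obtain ⟨haBF, hhdWc, htlWc⟩ := ha
    have hhdW : hd a ∉ W := (Finset.mem_sdiff.mp hhdWc).2
    have htlW : tl a ∈ W := by
      by_contra h
      exact htlWc (Finset.mem_sdiff.mpr ⟨Finset.mem_univ _, h⟩)
    refine ⟨a, haBF, htlW, hhdW, ?_⟩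
    intro Y hYne hYr
    have hBia : B \ insert a F = (B \ F).erase a := by
      rw [Finset.sdiff_insert]
    rw [hBia]
    by_cases henter : hd a ∈ Y ∧ tl a ∉ Y
    · by_cases htightY : inDeg hd tl (B \ F) Y = k
      · exfalso
        apply hTe
        refine ⟨Y, ?_⟩
        rw [hT, Finset.mem_filter]
        refine ⟨Finset.mem_univ _, hYne, hYr, htightY, ⟨hd a, ?_⟩⟩
        rw [Finset.mem_inter, Finset.mem_sdiff]
        exact ⟨henter.1, Finset.mem_univ _, hhdW⟩
      · have hge := hmaint Y hYne hYr
        have h1 := AX_inDeg_erase_ge hd tl (B \ F) a Y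
        omega
    · rw [AX_inDeg_erase_eq hd tl _ a Y henter]
      exact hmaint Y hYne hYr

lemma AX_partial_insert (F : Finset E) (a : E) (hpart : AXPartial hd tl r F)
    (htl : tl a ∈ insert r (F.image hd)) (hhd : hd a ∉ insert r (F.image hd)) :
    AXPartial hd tl r (insert a F) := by
  obtain ⟨htails, hdeg, hroot, hacyc⟩ := hpart
  have hWsub : insert r (F.image hd) ⊆ insert r ((insert a F).image hd) := by
    apply Finset.insert_subset_insert
    exact Finset.image_subset_image (Finset.subset_insert a F)
  refine ⟨?_, ?_, ?_, ?_⟩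
  · intro b hb
    rcases Finset.mem_insert.mp hb with rfl | hbF
    · exact hWsub htl
    · exact hWsub (htails b hbF)
  · intro v
    by_cases hv : hd a = v
    · have h0 : vDeg hd F v = 0 := by
        apply AX_vDeg_zero_of_not_mem_image
        intro hmem
        exact hhd (hv ▸ Finset.mem_insert_of_mem hmem)
      have := AX_vDeg_insert hd F a v
      omega
    · rw [AX_vDeg_insert_ne hd F a v hv]
      exact hdeg v
  · have hne : hd a ≠ r := by
      intro h
      rw [h] at hhd
      exact hhd (Finset.mem_insert_self r _)
    rw [AX_vDeg_insert_ne hd F a r hne]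
    exact hroot
  · intro hcyc
    rcases AX_dicycle_insert hd tl F a hcyc with ⟨b, hb, htlb⟩ | hcyc'
    · have : tl b ∈ insert r (F.image hd) := by
        rcases Finset.mem_insert.mp hb with rfl | hbF
        · exact htl
        · exact htails b hbF
      rw [htlb] at this
      exact hhd this
    · exact hacyc hcyc'

lemma AX_grow (k : ℕ) (B : Finset E)
    (hcut : ∀ X : Finset U, X.Nonempty → r ∉ X → k + 1 ≤ inDeg hd tl B X) :
    ∀ (m : ℕ) (F : Finset E), F ⊆ B → AXPartial hd tl r F →
    (∀ X : Finset U, X.Nonempty → r ∉ X → k ≤ inDeg hd tl (B \ F) X) →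
    (Finset.univ \ insert r (F.image hd)).card ≤ m →
    ∃ F' : Finset E, F' ⊆ B ∧ AXPartial hd tl r F' ∧
      insert r (F'.image hd) = Finset.univ ∧
      (∀ X : Finset U, X.Nonempty → r ∉ X → k ≤ inDeg hd tl (B \ F') X) := by
  intro m
  induction m with
  | zero =>
    intro F hFB hpart hmaint hm
    refine ⟨F, hFB, hpart, ?_, hmaint⟩
    have : Finset.univ \ insert r (F.image hd) = ∅ := Finset.card_eq_zero.mp (by omega)
    rw [Finset.sdiff_eq_empty_iff_subset] at this
    exact Finset.Subset.antisymm (Finset.subset_univ _) this |>.symm ▸ rfl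
  | succ m ih =>
    intro F hFB hpart hmaint hm
    by_cases hW : insert r (F.image hd) = Finset.univ
    · exact ⟨F, hFB, hpart, hW, hmaint⟩
    · obtain ⟨a, haBF, htl, hhd, hmaint'⟩ :=
        AX_step hd tl r k B hcut F hFB hpart hmaint hW
      rw [Finset.mem_sdiff] at haBF
      have hFB' : insert a F ⊆ B := Finset.insert_subset haBF.1 hFB
      have hpart' : AXPartial hd tl r (insert a F) :=
        AX_partial_insert hd tl r F a hpart htl hhd
      have hmeas : (Finset.univ \ insert r ((insert a F).image hd)).card ≤ m := by
        have himg : insert r ((insert a F).image hd)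
            = insert (hd a) (insert r (F.image hd)) := by
          rw [Finset.image_insert, Finset.insert_comm]
        rw [himg]
        have h1 : Finset.univ \ insert (hd a) (insert r (F.image hd))
            = (Finset.univ \ insert r (F.image hd)).erase (hd a) := by
          rw [Finset.sdiff_insert]
        rw [h1]
        have h2 : hd a ∈ Finset.univ \ insert r (F.image hd) :=
          Finset.mem_sdiff.mpr ⟨Finset.mem_univ _, hhd⟩
        have := Finset.card_erase_of_mem h2
        have h3 : 0 < (Finset.univ \ insert r (F.image hd)).card :=
          Finset.card_pos.mpr ⟨hd a, h2⟩
        omega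
      exact ih (insert a F) hFB' hpart' hmaint' hmeas

lemma AX_partial_isArb (F : Finset E) (hpart : AXPartial hd tl r F)
    (hspan : insert r (F.image hd) = Finset.univ) : IsArb hd tl r F := by
  obtain ⟨htails, hdeg, hroot, hacyc⟩ := hpart
  have hnoloop : ∀ a ∈ F, tl a ≠ hd a := by
    intro a ha h
    exact hacyc (AX_loop_dicycle hd tl F a ha h)
  have hin : ∀ v : U, inDeg hd tl F {v} = vDeg hd F v := by
    intro v
    unfold inDeg vDeg
    congr 1
    apply Finset.filter_congr
    intro a ha
    simp only [Finset.mem_singleton]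
    constructor
    · rintro ⟨h1, -⟩; exact h1
    · intro h1
      refine ⟨h1, ?_⟩
      rw [← h1]
      exact hnoloop a ha
  refine ⟨hacyc, ?_, ?_⟩
  · intro v hv
    rw [hin]
    have hvimg : v ∈ F.image hd := by
      have : v ∈ insert r (F.image hd) := hspan ▸ Finset.mem_univ v
      rcases Finset.mem_insert.mp this with rfl | h
      · exact absurd rfl hv
      · exact h
    rw [Finset.mem_image] at hvimg
    obtain ⟨a, ha, hav⟩ := hvimg
    have h1 : 0 < vDeg hd F v :=
      Finset.card_pos.mpr ⟨a, Finset.mem_filter.mpr ⟨ha, hav⟩⟩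
    have h2 := hdeg v
    omega
  · rw [hin]
    exact hroot

theorem AX_edmonds : ∀ (k : ℕ) (B : Finset E),
    (∀ X : Finset U, X.Nonempty → r ∉ X → k ≤ inDeg hd tl B X) →
    ∃ P : Fin k → Finset E, (∀ i j : Fin k, i ≠ j → Disjoint (P i) (P j)) ∧
      (∀ i, P i ⊆ B) ∧ (∀ i, IsArb hd tl r (P i)) := by
  intro k
  induction k with
  | zero =>
    intro B _
    exact ⟨fun i => i.elim0, fun i => i.elim0, fun i => i.elim0, fun i => i.elim0⟩
  | succ k ih =>
    intro B hcut
    have hpart0 : AXPartial hd tl r (∅ : Finset E) := by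
      refine ⟨by simp, ?_, ?_, ?_⟩
      · intro v; unfold vDeg; simp
      · unfold vDeg; simp
      · rintro ⟨n, hn, v, e, he, -⟩
        exact absurd (he ⟨0, hn⟩).1 (Finset.notMem_empty _)
    have hmaint0 : ∀ X : Finset U, X.Nonempty → r ∉ X →
        k ≤ inDeg hd tl (B \ ∅) X := by
      intro X hX hr
      rw [Finset.sdiff_empty]
      have := hcut X hX hr
      omega
    obtain ⟨F, hFB, hpart, hspan, hmaint⟩ :=
      AX_grow hd tl r k B hcut (Finset.univ \ insert r ((∅ : Finset E).image hd)).card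
        ∅ (Finset.empty_subset B) hpart0 hmaint0 le_rfl
    obtain ⟨P', hdis', hsub', harb'⟩ := ih (B \ F) hmaint
    refine ⟨Fin.cons F P', ?_, ?_, ?_⟩
    · have key : ∀ i' : Fin k, Disjoint F (P' i') := fun i' =>
        (Finset.sdiff_disjoint.mono_left (hsub' i')).symm
      intro i j hij
      rcases Fin.eq_zero_or_eq_succ i with rfl | ⟨i', rfl⟩ <;>
        rcases Fin.eq_zero_or_eq_succ j with rfl | ⟨j', rfl⟩
      · exact absurd rfl hij
      · simp only [Fin.cons_zero, Fin.cons_succ]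
        exact key j'
      · simp only [Fin.cons_zero, Fin.cons_succ]
        exact (key i').symm
      · simp only [Fin.cons_succ]
        exact hdis' i' j' (fun h => hij (by rw [h]))
    · intro i
      rcases Fin.eq_zero_or_eq_succ i with rfl | ⟨i', rfl⟩
      · simpa using hFB
      · simp only [Fin.cons_succ]
        exact (hsub' i').trans Finset.sdiff_subset
    · intro i
      rcases Fin.eq_zero_or_eq_succ i with rfl | ⟨i', rfl⟩
      · simpa using AX_partial_isArb hd tl r F hpart hspan
      · simp only [Fin.cons_succ]
        exact harb' i'

end Edmonds

section Counting

variable [DecidableEq V] [DecidableEq A] (hd tl : A → V)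

lemma AX_fin_count (k d : ℕ) (h : d ≤ k) :
    ((Finset.univ : Finset (Fin k)).filter (fun j => j.val + d < k)).card = k - d := by
  rcases Nat.eq_zero_or_pos d with rfl | hd0
  · have : (Finset.univ : Finset (Fin k)).filter (fun j => j.val + 0 < k) = Finset.univ := by
      apply Finset.filter_true_of_mem
      intro j _
      simpa using j.isLt
    rw [this]
    simp
  · have hlt : k - d < k := by omega
    have : (Finset.univ : Finset (Fin k)).filter (fun j => j.val + d < k)
        = Finset.Iio (⟨k - d, hlt⟩ : Fin k) := by
      ext j
      simp only [Finset.mem_filter, Finset.mem_univ, true_and, Finset.mem_Iio, Fin.lt_def]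
      omega
    rw [this, Fin.card_Iio]

lemma AX_sum_vDeg [Fintype V] (S : Finset A) :
    ∑ v : V, vDeg hd S v = S.card := by
  unfold vDeg
  exact (Finset.card_eq_sum_card_fiberwise (fun a _ => Finset.mem_univ (hd a))).symm

/-- The root-arc index set below `X'`. -/
def AXRX (k : ℕ) (S : Finset A) (X' : Finset V) : Finset (V × Fin k) :=
  X'.biUnion (fun v => ({v} : Finset V) ×ˢ
    (Finset.univ.filter (fun j : Fin k => j.val + vDeg hd S v < k)))

lemma AX_mem_RX (k : ℕ) (S : Finset A) (X' : Finset V) (p : V × Fin k) :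
    p ∈ AXRX hd k S X' ↔ p.1 ∈ X' ∧ p.2.val + vDeg hd S p.1 < k := by
  unfold AXRX
  simp only [Finset.mem_biUnion, Finset.mem_product, Finset.mem_singleton,
    Finset.mem_filter, Finset.mem_univ, true_and]
  constructor
  · rintro ⟨v, hv, rfl, h2⟩
    exact ⟨hv, h2⟩
  · rintro ⟨h1, h2⟩
    exact ⟨p.1, h1, rfl, h2⟩

lemma AX_card_RX (k : ℕ) (S : Finset A) (X' : Finset V)
    (hdeg : ∀ v, vDeg hd S v ≤ k) :
    (AXRX hd k S X').card = ∑ v ∈ X', (k - vDeg hd S v) := by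
  unfold AXRX
  rw [Finset.card_biUnion]
  · apply Finset.sum_congr rfl
    intro v _
    rw [Finset.card_product, Finset.card_singleton, one_mul]
    exact AX_fin_count k (vDeg hd S v) (hdeg v)
  · intro x _ y _ hxy
    simp only [Finset.disjoint_left, Finset.mem_product, Finset.mem_singleton]
    rintro p ⟨rfl, -⟩ ⟨h, -⟩
    exact hxy h

lemma AX_sum_k_sub [Fintype V] (k : ℕ) (S : Finset A) (X' : Finset V)
    (hdeg : ∀ v, vDeg hd S v ≤ k) :
    (∑ v ∈ X', (k - vDeg hd S v)) + ∑ v ∈ X', vDeg hd S v = k * X'.card := by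
  rw [← Finset.sum_add_distrib]
  have : ∀ v ∈ X', (k - vDeg hd S v) + vDeg hd S v = k := by
    intro v _
    have := hdeg v
    omega
  rw [Finset.sum_congr rfl this]
  simp [mul_comm]

/-- Splitting the head-count over `X'` into entering and induced arcs. -/
lemma AX_head_split [Fintype V] (S : Finset A) (X' : Finset V) :
    ∑ v ∈ X', vDeg hd S v =
      inDeg hd tl S X' + (S.filter (fun a => hd a ∈ X' ∧ tl a ∈ X')).card := by
  have h1 : ∑ v ∈ X', vDeg hd S v = (S.filter (fun a => hd a ∈ X')).card := by
    unfold vDeg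
    rw [Finset.card_eq_sum_card_fiberwise
      (f := hd) (s := S.filter (fun a => hd a ∈ X')) (t := X') (fun a ha => (Finset.mem_filter.mp ha).2)]
    apply Finset.sum_congr rfl
    intro v hv
    congr 1
    ext a
    simp only [Finset.mem_filter]
    constructor
    · rintro ⟨ha, hv'⟩
      exact ⟨⟨ha, hv' ▸ hv⟩, hv'⟩
    · rintro ⟨⟨ha, -⟩, hv'⟩
      exact ⟨ha, hv'⟩
  rw [h1]
  unfold inDeg
  have hsplit := Finset.card_filter_add_card_filter_not
    (s := S.filter (fun a => hd a ∈ X')) (p := fun a => tl a ∉ X')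
  rw [Finset.filter_filter, Finset.filter_filter] at hsplit
  have he : S.filter (fun a => hd a ∈ X' ∧ ¬ tl a ∉ X')
      = S.filter (fun a => hd a ∈ X' ∧ tl a ∈ X') := by
    apply Finset.filter_congr
    intro a _
    simp only [not_not]
  rw [he] at hsplit
  omega

end Counting

theorem AX_frank [Fintype V] [DecidableEq V] [DecidableEq A] (hd tl : A → V)
    (k : ℕ) (S : Finset A) (hne : Nonempty V)
    (hdeg : ∀ v, vDeg hd S v ≤ k)
    (hcard : S.card + k = k * Fintype.card V)
    (hsparse : ∀ X' : Finset V, X'.Nonempty →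
      (S.filter (fun a => hd a ∈ X' ∧ tl a ∈ X')).card + k ≤ k * X'.card) :
    FeasibleAny hd tl k S := by
  classical
  set n := Fintype.card V with hn
  have hn1 : 1 ≤ n := Fintype.card_pos_iff.mpr hne
  set hde : A ⊕ V × Fin k → Option V :=
    Sum.elim (fun a => some (hd a)) (fun p => some p.1) with hhde
  set tle : A ⊕ V × Fin k → Option V :=
    Sum.elim (fun a => some (tl a)) (fun _ => none) with htle
  set B : Finset (A ⊕ V × Fin k) :=
    S.image Sum.inl ∪ (AXRX hd k S Finset.univ).image Sum.inr with hB
  have hdisIm : Disjoint (S.image (Sum.inl : A → A ⊕ V × Fin k))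
      ((AXRX hd k S Finset.univ).image Sum.inr) := by
    rw [Finset.disjoint_left]
    intro x hx hx'
    rw [Finset.mem_image] at hx hx'
    obtain ⟨a, -, rfl⟩ := hx
    obtain ⟨p, -, hp⟩ := hx'
    exact absurd hp (by simp)
  have hmemB_inl : ∀ a : A, (Sum.inl a : A ⊕ V × Fin k) ∈ B ↔ a ∈ S := by
    intro a
    rw [hB, Finset.mem_union]
    constructor
    · rintro (h | h)
      · rw [Finset.mem_image] at h
        obtain ⟨b, hb, hba⟩ := h
        rwa [← Sum.inl_injective hba]
      · rw [Finset.mem_image] at h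
        obtain ⟨p, -, hp⟩ := h
        exact absurd hp (by simp)
    · intro h
      exact Or.inl (Finset.mem_image_of_mem _ h)
  -- the total number of root arcs is k
  have hRcard : (AXRX hd k S Finset.univ).card = k := by
    rw [AX_card_RX hd k S Finset.univ hdeg]
    have h1 := AX_sum_k_sub hd (V := V) k S Finset.univ hdeg
    have h2 := AX_sum_vDeg hd (V := V) S
    rw [Finset.card_univ, ← hn] at h1
    omega
  have hBcard : B.card = k * n := by
    rw [hB, Finset.card_union_of_disjoint hdisIm,
      Finset.card_image_of_injective _ Sum.inl_injective,
      Finset.card_image_of_injective _ Sum.inr_injective, hRcard]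
    omega
  -- cut condition in the extended digraph
  have hcut : ∀ X : Finset (Option V), X.Nonempty → none ∉ X →
      k ≤ inDeg hde tle B X := by
    intro X hXne hnone
    set X' : Finset V := Finset.univ.filter (fun v => some v ∈ X) with hX'
    have hsome : ∀ v : V, some v ∈ X ↔ v ∈ X' := by
      intro v
      rw [hX', Finset.mem_filter]
      simp
    have hX'ne : X'.Nonempty := by
      obtain ⟨x, hx⟩ := hXne
      match x with
      | none => exact absurd hx hnone
      | some v => exact ⟨v, (hsome v).mp hx⟩
    have hsplitB : inDeg hde tle B X =
        inDeg hd tl S X' + ∑ v ∈ X', (k - vDeg hd S v) := by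
      unfold inDeg
      rw [hB, Finset.filter_union,
        Finset.card_union_of_disjoint
          (Finset.disjoint_filter_filter hdisIm),
        Finset.filter_image, Finset.filter_image,
        Finset.card_image_of_injective _ Sum.inl_injective,
        Finset.card_image_of_injective _ Sum.inr_injective]
      congr 1
      · congr 1
        apply Finset.filter_congr
        intro a _
        rw [hhde, htle]
        simp only [Sum.elim_inl, Finset.mem_singleton]
        rw [hsome (hd a)]
        constructor
        · rintro ⟨h1, h2⟩
          exact ⟨h1, fun h => h2 ((hsome (tl a)).mpr h)⟩
        · rintro ⟨h1, h2⟩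
          exact ⟨h1, fun h => h2 ((hsome (tl a)).mp h)⟩
      · rw [← AX_card_RX hd k S X' hdeg]
        congr 1
        ext p
        rw [Finset.mem_filter, AX_mem_RX, AX_mem_RX, hhde, htle]
        simp only [Sum.elim_inr, Finset.mem_univ, true_and]
        rw [hsome p.1]
        constructor
        · rintro ⟨h1, h2, -⟩
          exact ⟨h2, h1⟩
        · rintro ⟨h1, h2⟩
          exact ⟨h2, h1, hnone⟩
    rw [hsplitB]
    have h1 := AX_head_split hd tl S X'
    have h2 := AX_sum_k_sub hd k S X' hdeg
    have h3 := hsparse X' hX'ne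
    omega
  obtain ⟨Ph, hdisP, hsubP, harbP⟩ :=
    AX_edmonds hde tle (none : Option V) k B hcut
  have hcardOpt : Fintype.card (Option V) = n + 1 := by
    rw [Fintype.card_option]
  have hPcard : ∀ i, (Ph i).card = n := by
    intro i
    have := AX_arb_card hde tle (harbP i)
    rw [hcardOpt] at this
    omega
  have hbiU : Finset.univ.biUnion Ph = B := by
    apply Finset.eq_of_subset_of_card_le
    · exact Finset.biUnion_subset.mpr (fun i _ => hsubP i)
    · rw [Finset.card_biUnion (fun i _ j _ hij => hdisP i j hij), hBcard]
      calc k * n = ∑ _i : Fin k, n := by simp [mul_comm]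
        _ ≤ ∑ i, (Ph i).card := by
            apply Finset.sum_le_sum
            intro i _
            rw [hPcard i]
  -- every tree contains at least one root arc, and there are k in total
  have hBfilterR : B.filter (fun x => Sum.isRight x = true)
      = (AXRX hd k S Finset.univ).image Sum.inr := by
    ext x
    rw [Finset.mem_filter, hB, Finset.mem_union]
    match x with
    | Sum.inl a => simp
    | Sum.inr p =>
      simp only [Sum.isRight_inr, and_true]
      constructor
      · rintro (h | h)
        · rw [Finset.mem_image] at h
          obtain ⟨b, -, hb⟩ := h
          exact absurd hb (by simp)
        · exact h
      · exact Or.inr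
  have hrootSum : ∑ i, ((Ph i).filter (fun x => Sum.isRight x = true)).card = k := by
    rw [← AX_card_filter_biUnion Ph hdisP (fun x => Sum.isRight x = true), hbiU,
      hBfilterR, Finset.card_image_of_injective _ Sum.inr_injective, hRcard]
  have hroot1 : ∀ i, 1 ≤ ((Ph i).filter (fun x => Sum.isRight x = true)).card := by
    intro i
    rw [Nat.one_le_iff_ne_zero, Ne, Finset.card_eq_zero, ← Ne,
      ← Finset.nonempty_iff_ne_empty]
    by_contra hno
    rw [Finset.not_nonempty_iff_eq_empty, Finset.filter_eq_empty_iff] at hno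
    apply (harbP i).1
    apply AX_chase hde tle (Ph i) ((Finset.univ : Finset V).image some)
      ⟨some (Classical.arbitrary V), Finset.mem_image_of_mem _ (Finset.mem_univ _)⟩
    intro x hx
    rw [Finset.mem_image] at hx
    obtain ⟨v, -, rfl⟩ := hx
    have h1 : inDeg hde tle (Ph i) {some v} = 1 :=
      (harbP i).2.1 (some v) (Option.some_ne_none v)
    unfold inDeg at h1
    rw [Finset.card_eq_one] at h1
    obtain ⟨b, hb⟩ := h1
    have hbmem : b ∈ (Ph i).filter
        (fun x => hde x ∈ ({some v} : Finset (Option V)) ∧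
          tle x ∉ ({some v} : Finset (Option V))) := by
      rw [hb]; exact Finset.mem_singleton_self b
    rw [Finset.mem_filter, Finset.mem_singleton] at hbmem
    obtain ⟨hbP, hbhd, -⟩ := hbmem
    refine ⟨b, hbP, hbhd, ?_⟩
    match b, hbP with
    | Sum.inl a, hbP =>
      rw [htle]
      simp only [Sum.elim_inl]
      exact Finset.mem_image_of_mem _ (Finset.mem_univ _)
    | Sum.inr p, hbP =>
      exact absurd Sum.isRight_inr (hno hbP)
  have hrootEq : ∀ i, ((Ph i).filter (fun x => Sum.isRight x = true)).card = 1 := by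
    intro i
    by_contra hne1
    have h2 : 2 ≤ ((Ph i).filter (fun x => Sum.isRight x = true)).card := by
      have := hroot1 i
      omega
    have hsum2 : k + 1 ≤ ∑ j, ((Ph j).filter (fun x => Sum.isRight x = true)).card := by
      rw [← Finset.add_sum_erase _ _ (Finset.mem_univ i)]
      have hsum_ge : (Finset.univ.erase i).card • 1 ≤
          ∑ j ∈ Finset.univ.erase i,
            ((Ph j).filter (fun x => Sum.isRight x = true)).card :=
        Finset.card_nsmul_le_sum _ _ _ (fun j _ => hroot1 j)
      rw [Finset.card_erase_of_mem (Finset.mem_univ i), Finset.card_univ,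
        Fintype.card_fin] at hsum_ge
      have hk1 : 1 ≤ k := by
        have : (i : Fin k) = i := rfl
        have := i.isLt
        omega
      simp only [smul_eq_mul, mul_one] at hsum_ge
      omega
    rw [hrootSum] at hsum2
    omega
  -- extract the unique root arc of each tree
  have hrootEx : ∀ i, ∃ (ρ : V) (j : Fin k),
      (Ph i).filter (fun x => Sum.isRight x = true) = {Sum.inr (ρ, j)} := by
    intro i
    obtain ⟨x, hx⟩ := Finset.card_eq_one.mp (hrootEq i)
    have hxm : x ∈ (Ph i).filter (fun x => Sum.isRight x = true) := by
      rw [hx]; exact Finset.mem_singleton_self x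
    rw [Finset.mem_filter] at hxm
    match x, hx, hxm with
    | Sum.inl a, hx, hxm => simp at hxm
    | Sum.inr p, hx, hxm => exact ⟨p.1, p.2, hx⟩
  choose ρ rj hRho using hrootEx
  -- the restricted trees
  set P : Fin k → Finset A := fun i => S.filter (fun a => Sum.inl a ∈ Ph i) with hP
  have hPsubPh : ∀ i a, a ∈ P i → Sum.inl a ∈ Ph i := by
    intro i a ha
    rw [hP, Finset.mem_filter] at ha
    exact ha.2
  -- key degree identity
  have hkey : ∀ (i : Fin k) (v : V), inDeg hde tle (Ph i) {some v} =
      inDeg hd tl (P i) {v} + (if ρ i = v then 1 else 0) := by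
    intro i v
    unfold inDeg
    have hdecomp : (Ph i).filter (fun x => hde x ∈ ({some v} : Finset (Option V)) ∧
          tle x ∉ ({some v} : Finset (Option V)))
        = ((P i).filter (fun a => hd a ∈ ({v} : Finset V) ∧
            tl a ∉ ({v} : Finset V))).image Sum.inl
          ∪ ((Ph i).filter (fun x => Sum.isRight x = true)).filter
              (fun x => hde x = some v) := by
      ext x
      rw [Finset.mem_union, Finset.mem_filter, Finset.mem_filter, Finset.mem_filter,
        Finset.mem_singleton]
      match x with
      | Sum.inl a =>
        simp only [hhde, htle, Sum.elim_inl, Finset.mem_image, Sum.isRight_inl,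
          Bool.false_eq_true, and_false, false_and, or_false, Finset.mem_singleton,
          Option.some.injEq, hP, Finset.mem_filter]
        constructor
        · rintro ⟨haP, h1, h2⟩
          exact ⟨a, ⟨⟨(hmemB_inl a).mp (hsubP i haP), haP⟩, h1, h2⟩, rfl⟩
        · rintro ⟨b, ⟨⟨hbS, hbP⟩, h1, h2⟩, hba⟩
          cases Sum.inl_injective hba
          exact ⟨hbP, h1, h2⟩
      | Sum.inr p =>
        have hL : hde (Sum.inr p) = some p.1 := rfl
        have hT : tle (Sum.inr p) = none := rfl
        rw [hL, hT]
        simp only [Finset.mem_image, Finset.mem_singleton, Option.some.injEq,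
          Sum.isRight_inr, and_true, true_and, reduceCtorEq, and_false, false_and,
          exists_false, false_or, not_false_iff]
    have hdisj2 : Disjoint (((P i).filter (fun a => hd a ∈ ({v} : Finset V) ∧
          tl a ∉ ({v} : Finset V))).image Sum.inl)
        (((Ph i).filter (fun x => Sum.isRight x = true)).filter
          (fun x => hde x = some v)) := by
      rw [Finset.disjoint_left]
      intro x hx hx'
      rw [Finset.mem_image] at hx
      obtain ⟨b, -, rfl⟩ := hx
      rw [Finset.mem_filter, Finset.mem_filter] at hx'
      simp at hx'
    have hsecond : ((Ph i).filter (fun x => Sum.isRight x = true)).filter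
        (fun x => hde x = some v)
        = if ρ i = v then {Sum.inr (ρ i, rj i)} else (∅ : Finset (A ⊕ V × Fin k)) := by
      rw [hRho i, Finset.filter_singleton]
      have hiff : (hde (Sum.inr (ρ i, rj i)) = some v) ↔ (ρ i = v) := by
        rw [show hde (Sum.inr (ρ i, rj i)) = some (ρ i) from rfl]
        exact Option.some_inj
      exact if_congr hiff rfl rfl
    rw [hdecomp, Finset.card_union_of_disjoint hdisj2,
      Finset.card_image_of_injective _ Sum.inl_injective, hsecond]
    by_cases hv : ρ i = v <;> simp [hv]
  -- each restricted tree is an arborescence rooted at ρ i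
  have harbRes : ∀ i, IsArb hd tl (ρ i) (P i) := by
    intro i
    refine ⟨?_, ?_, ?_⟩
    · rintro ⟨m, hm, vv, ee, hee, hcl⟩
      apply (harbP i).1
      refine ⟨m, hm, fun l => some (vv l), fun l => Sum.inl (ee l), ?_,
        by simpa using congrArg some hcl⟩
      intro l
      refine ⟨hPsubPh i _ (hee l).1, ?_, ?_⟩
      · rw [htle]; simp only [Sum.elim_inl]; rw [(hee l).2.1]
      · rw [hhde]; simp only [Sum.elim_inl]; rw [(hee l).2.2]
    · intro v hv
      have h1 : inDeg hde tle (Ph i) {some v} = 1 :=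
        (harbP i).2.1 (some v) (Option.some_ne_none v)
      rw [hkey i v, if_neg (fun h => hv h.symm)] at h1
      omega
    · have h1 : inDeg hde tle (Ph i) {some (ρ i)} = 1 :=
        (harbP i).2.1 (some (ρ i)) (Option.some_ne_none _)
      rw [hkey i (ρ i), if_pos rfl] at h1
      omega
  -- assemble
  refine ⟨P, ?_, ?_, fun i => ⟨ρ i, harbRes i⟩⟩
  · intro i j hij
    rw [Finset.disjoint_left]
    intro a ha ha'
    exact Finset.disjoint_left.mp (hdisP i j hij) (hPsubPh i a ha) (hPsubPh j a ha')
  · apply Finset.Subset.antisymm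
    · exact Finset.biUnion_subset.mpr (fun i _ => Finset.filter_subset _ S)
    · intro a ha
      have : (Sum.inl a : A ⊕ V × Fin k) ∈ B := (hmemB_inl a).mpr ha
      rw [← hbiU, Finset.mem_biUnion] at this
      obtain ⟨i, -, hi⟩ := this
      rw [Finset.mem_biUnion]
      exact ⟨i, Finset.mem_univ i, by rw [hP, Finset.mem_filter]; exact ⟨ha, hi⟩⟩

section Exchange

variable [Fintype V] [DecidableEq V] [DecidableEq A]

lemma AX_ind_supermod (hd tl : A → V) (S : Finset A) (X Y : Finset V) :
    (S.filter (fun a => hd a ∈ X ∧ tl a ∈ X)).card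
      + (S.filter (fun a => hd a ∈ Y ∧ tl a ∈ Y)).card ≤
    (S.filter (fun a => hd a ∈ X ∪ Y ∧ tl a ∈ X ∪ Y)).card
      + (S.filter (fun a => hd a ∈ X ∩ Y ∧ tl a ∈ X ∩ Y)).card := by
  classical
  rw [Finset.card_filter, Finset.card_filter, Finset.card_filter, Finset.card_filter,
    ← Finset.sum_add_distrib, ← Finset.sum_add_distrib]
  apply Finset.sum_le_sum
  intro a _
  by_cases h1 : hd a ∈ X <;> by_cases h2 : hd a ∈ Y <;>
    by_cases h3 : tl a ∈ X <;> by_cases h4 : tl a ∈ Y <;>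
    simp [Finset.mem_union, Finset.mem_inter, h1, h2, h3, h4]

theorem AX_main (hd tl : A → V) (k : ℕ) (hk : 0 < k) (S T : Finset A)
    (hS : FeasibleAny hd tl k S) (hT : FeasibleAny hd tl k T)
    (v : V) (hv : vDeg hd S v ≠ vDeg hd T v) :
    ∃ e ∈ S \ T, ∃ f ∈ T \ S, FeasibleAny hd tl k (insert f (S.erase e)) := by
  classical
  set n := Fintype.card V with hn
  have hne : Nonempty V := ⟨v⟩
  have hScard := AX_feas_card hS
  have hTcard := AX_feas_card hT
  rw [← hn] at hScard hTcard
  have hSdeg : ∀ w, vDeg hd S w ≤ k := AX_feas_vDeg_le hS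
  have hTdeg : ∀ w, vDeg hd T w ≤ k := AX_feas_vDeg_le hT
  have hSsparse := AX_feas_sparse hS
  have hTsparse := AX_feas_sparse hT
  -- find a vertex with strictly smaller in-degree in S
  have hu : ∃ u : V, vDeg hd S u < vDeg hd T u := by
    by_contra hno
    push_neg at hno
    have hsumS := AX_sum_vDeg hd (V := V) S
    have hsumT := AX_sum_vDeg hd (V := V) T
    have hsums : ∑ w : V, vDeg hd T w = ∑ w : V, vDeg hd S w := by omega
    have := (Finset.sum_eq_sum_iff_of_le (fun w _ => hno w)).mp hsums v
      (Finset.mem_univ v)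
    exact hv this.symm
  obtain ⟨u, hu⟩ := hu
  -- find f ∈ T \ S with head u
  have hf : ∃ f, f ∈ T ∧ f ∉ S ∧ hd f = u := by
    by_contra hno
    push_neg at hno
    have hsub : T.filter (fun a => hd a = u) ⊆ S.filter (fun a => hd a = u) := by
      intro a ha
      rw [Finset.mem_filter] at ha ⊢
      refine ⟨?_, ha.2⟩
      by_contra haS
      exact (hno a ha.1 haS) ha.2
    have := Finset.card_le_card hsub
    unfold vDeg at hu
    omega
  obtain ⟨f, hfT, hfS, hfu⟩ := hf
  -- minimal tight set containing both endpoints of f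
  set STight : Finset V → Prop := fun X =>
    hd f ∈ X ∧ tl f ∈ X ∧
      (S.filter (fun a => hd a ∈ X ∧ tl a ∈ X)).card + k = k * X.card with hSTight
  have hTightUniv : STight Finset.univ := by
    refine ⟨Finset.mem_univ _, Finset.mem_univ _, ?_⟩
    rw [Finset.filter_true_of_mem (fun a _ => ⟨Finset.mem_univ _, Finset.mem_univ _⟩),
      Finset.card_univ, ← hn]
    exact hScard
  set Fam : Finset (Finset V) := Finset.univ.filter STight with hFam
  have hFamNe : Fam.Nonempty := ⟨Finset.univ, by
    rw [hFam, Finset.mem_filter]; exact ⟨Finset.mem_univ _, hTightUniv⟩⟩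
  obtain ⟨X0, hX0mem, hX0min⟩ := Fam.exists_min_image Finset.card hFamNe
  rw [hFam, Finset.mem_filter] at hX0mem
  obtain ⟨-, hX0hd, hX0tl, hX0tight⟩ := hX0mem
  have hX0ne : X0.Nonempty := ⟨hd f, hX0hd⟩
  -- minimality: X0 is contained in every tight set
  have hX0sub : ∀ Y : Finset V, STight Y → X0 ⊆ Y := by
    intro Y hY
    obtain ⟨hYhd, hYtl, hYtight⟩ := hY
    have hIne : (X0 ∩ Y).Nonempty := ⟨hd f, Finset.mem_inter.mpr ⟨hX0hd, hYhd⟩⟩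
    have hUne : (X0 ∪ Y).Nonempty := hX0ne.mono Finset.subset_union_left
    have hsup := AX_ind_supermod hd tl S X0 Y
    have hsp1 := hSsparse (X0 ∪ Y) hUne
    have hsp2 := hSsparse (X0 ∩ Y) hIne
    have hcardIU : (X0 ∪ Y).card + (X0 ∩ Y).card = X0.card + Y.card :=
      Finset.card_union_add_card_inter X0 Y
    -- the intersection is tight
    have hItight : (S.filter (fun a => hd a ∈ X0 ∩ Y ∧ tl a ∈ X0 ∩ Y)).card + k
        = k * (X0 ∩ Y).card := by
      have hmul : k * (X0 ∪ Y).card + k * (X0 ∩ Y).card = k * X0.card + k * Y.card := by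
        rw [← Nat.mul_add, ← Nat.mul_add, hcardIU]
      omega
    have hImem : X0 ∩ Y ∈ Fam := by
      rw [hFam, Finset.mem_filter]
      exact ⟨Finset.mem_univ _, Finset.mem_inter.mpr ⟨hX0hd, hYhd⟩,
        Finset.mem_inter.mpr ⟨hX0tl, hYtl⟩, hItight⟩
    have hle := hX0min _ hImem
    have hXeq : X0 ∩ Y = X0 := by
      apply Finset.eq_of_subset_of_card_le Finset.inter_subset_left
      exact le_trans hle (le_refl _)
    rw [← hXeq]
    exact Finset.inter_subset_right
  -- find e ∈ S \ T induced in X0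
  have he : ∃ e, e ∈ S ∧ e ∉ T ∧ hd e ∈ X0 ∧ tl e ∈ X0 := by
    by_contra hno
    push_neg at hno
    have hsub : insert f (S.filter (fun a => hd a ∈ X0 ∧ tl a ∈ X0))
        ⊆ T.filter (fun a => hd a ∈ X0 ∧ tl a ∈ X0) := by
      intro a ha
      rcases Finset.mem_insert.mp ha with rfl | ha'
      · exact Finset.mem_filter.mpr ⟨hfT, hX0hd, hX0tl⟩
      · rw [Finset.mem_filter] at ha' ⊢
        refine ⟨?_, ha'.2⟩
        by_contra haT
        exact (hno a ha'.1 haT ha'.2.1) ha'.2.2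
    have hcardle := Finset.card_le_card hsub
    rw [Finset.card_insert_of_notMem
      (fun h => hfS (Finset.mem_filter.mp h).1)] at hcardle
    have hTs := hTsparse X0 hX0ne
    omega
  obtain ⟨e, heS, heT, hehd, hetl⟩ := he
  refine ⟨e, Finset.mem_sdiff.mpr ⟨heS, heT⟩, f, Finset.mem_sdiff.mpr ⟨hfT, hfS⟩, ?_⟩
  -- verify the hypotheses of Frank's theorem for the exchanged set
  set S' : Finset A := insert f (S.erase e) with hS'
  have hfSe : f ∉ S.erase e := fun h => hfS (Finset.mem_of_mem_erase h)
  have hS'card : S'.card = S.card := by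
    rw [hS', Finset.card_insert_of_notMem hfSe, Finset.card_erase_of_mem heS]
    have : 0 < S.card := Finset.card_pos.mpr ⟨e, heS⟩
    omega
  apply AX_frank hd tl k S' hne
  · -- degrees
    intro w
    have hins : vDeg hd S' w ≤ vDeg hd (S.erase e) w + if hd f = w then 1 else 0 := by
      rw [hS']
      unfold vDeg
      rw [Finset.filter_insert]
      by_cases hw : hd f = w
      · rw [if_pos hw, if_pos hw]
        exact le_trans (Finset.card_insert_le _ _) (by omega)
      · rw [if_neg hw, if_neg hw]
        omega
    have herase : vDeg hd (S.erase e) w ≤ vDeg hd S w := by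
      unfold vDeg
      exact Finset.card_le_card (Finset.filter_subset_filter _ (Finset.erase_subset e S))
    by_cases hw : w = u
    · subst hw
      rw [hfu] at hins
      rw [if_pos rfl] at hins
      have := hTdeg w
      omega
    · have : hd f ≠ w := by rw [hfu]; exact fun h => hw h.symm
      rw [if_neg this] at hins
      have := hSdeg w
      omega
  · rw [hS'card]; exact hScard
  · -- sparsity
    intro Y hYne
    have hSsp := hSsparse Y hYne
    rw [hS']
    rw [Finset.filter_insert]
    have heraseSub : (S.erase e).filter (fun a => hd a ∈ Y ∧ tl a ∈ Y)
        ⊆ S.filter (fun a => hd a ∈ Y ∧ tl a ∈ Y) :=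
      Finset.filter_subset_filter _ (Finset.erase_subset e S)
    by_cases hfY : hd f ∈ Y ∧ tl f ∈ Y
    · rw [if_pos hfY]
      have hcardins := Finset.card_insert_le f
        ((S.erase e).filter (fun a => hd a ∈ Y ∧ tl a ∈ Y))
      by_cases htY : (S.filter (fun a => hd a ∈ Y ∧ tl a ∈ Y)).card + k = k * Y.card
      · -- Y is tight, hence contains X0 and thus e
        have hYF : STight Y := ⟨hfY.1, hfY.2, htY⟩
        have hsubY := hX0sub Y hYF
        have heY : e ∈ S.filter (fun a => hd a ∈ Y ∧ tl a ∈ Y) :=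
          Finset.mem_filter.mpr ⟨heS, hsubY hehd, hsubY hetl⟩
        have hfe : (S.erase e).filter (fun a => hd a ∈ Y ∧ tl a ∈ Y)
            = (S.filter (fun a => hd a ∈ Y ∧ tl a ∈ Y)).erase e := by
          rw [Finset.filter_erase]
        have : ((S.erase e).filter (fun a => hd a ∈ Y ∧ tl a ∈ Y)).card
            = (S.filter (fun a => hd a ∈ Y ∧ tl a ∈ Y)).card - 1 := by
          rw [hfe, Finset.card_erase_of_mem heY]
        have hpos : 0 < (S.filter (fun a => hd a ∈ Y ∧ tl a ∈ Y)).card :=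
          Finset.card_pos.mpr ⟨e, heY⟩
        omega
      · -- Y is not tight, slack at least one
        have hlt : (S.filter (fun a => hd a ∈ Y ∧ tl a ∈ Y)).card + k < k * Y.card := by
          omega
        have := Finset.card_le_card heraseSub
        omega
    · rw [if_neg hfY]
      have := Finset.card_le_card heraseSub
      omega

end Exchange

theorem stmt_13 [Fintype V] [DecidableEq V] [DecidableEq A] (hd tl : A → V)
    (k : ℕ) (hk : 0 < k) (S T : Finset A)
    (hS : FeasibleAny hd tl k S) (hT : FeasibleAny hd tl k T)
    (v : V) (hv : vDeg hd S v ≠ vDeg hd T v) :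
    ∃ e ∈ S \ T, ∃ f ∈ T \ S, FeasibleAny hd tl k (insert f (S.erase e)) := by
  exact AX_main hd tl k hk S T hS hT v hv
end
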